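/- arXiv:1809.03631 — 8 statements merged into one kernel-verified Lean document; each statement's English description precedes it below -/
import Mathlib

section
/- Let d ≥ 1, 0 < α < 2, and let N be a seminorm on ℝ^d with K = {s ∈ S_d : N(s) = 0} and C = {s ∈ ℝ^d : N(s) = 1}. Let Γ be a finite symmetric Borel measure on the Euclidean unit sphere S_d. Then the following are equivalent: (i) there exists a symmetric Borel measure γ on ℝ^d concentrated on C such that ∫_C |⟨u,s⟩|^α dγ(s) < ∞ for every u ∈ ℝ^d and ∫_{S_d} |⟨u,s⟩|^α dΓ(s) = ∫_C |⟨u,s⟩|^α dγ(s) for every u ∈ ℝ^d; (ii) Γ(K) = 0. -/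
/-!
Averaging the identity `∫ |⟪u, s⟫| ^ α dΓ = ∫ |⟪u, s⟫| ^ α dγ` over `u` in the unit ball, after
substituting `A† u` for `u`, gives `∫ ‖A s‖ ^ α dΓ = ∫ ‖A s‖ ^ α dγ` for every linear map `A`: by
rotation invariance, `∫_{‖u‖ < 1} |⟪u, v⟫| ^ α du` is a positive finite multiple of `‖v‖ ^ α`.
Let `P`, `Q` be the orthogonal projections onto the kernel `V` of `N` and onto `Vᗮ`. Using
`A = P + n Q` and `A = n Q`, the defect `‖P s + n Q s‖ ^ α - ‖n Q s‖ ^ α` has the same integral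
against both measures. It equals `1` on `K`, while on `C` (where `Q s ≠ 0`) it is dominated by
`‖P s‖ ^ α` and tends to `0` as `n → ∞` because `α < 2`. Hence `Γ K = 0`.

Conversely, if `Γ K = 0`, the push-forward of `N ^ α • Γ|_S` under `s ↦ s / N s` is a symmetric
measure on `C` with the same `α`-moments, since `|⟪u, s⟫| ^ α` is `α`-homogeneous in `s`.
-/

open MeasureTheory Filter Metric
open scoped RealInnerProductSpace ENNReal Topology

theorem Real.rpow_eq_sq_rpow_half {r : ℝ} (hr : 0 ≤ r) (α : ℝ) : r ^ α = (r ^ 2) ^ (α / 2) := by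
  rw [← Real.rpow_natCast, ← Real.rpow_mul hr]
  ring_nf

theorem Real.tendsto_add_rpow_sub_rpow_atTop {a p : ℝ} (ha : 0 ≤ a) (hp0 : 0 ≤ p) (hp1 : p < 1) :
    Tendsto (fun x : ℝ => (a + x) ^ p - x ^ p) atTop (𝓝 0) := by
  have hlow : ∀ᶠ x : ℝ in atTop, 0 ≤ (a + x) ^ p - x ^ p := by
    filter_upwards [eventually_ge_atTop 0] with x hx
    exact sub_nonneg.2 (Real.rpow_le_rpow hx (by linarith) hp0)
  -- `(a + x) ^ p = x ^ p (1 + a / x) ^ p ≤ x ^ p (1 + a / x)`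
  have hup : ∀ᶠ x : ℝ in atTop, (a + x) ^ p - x ^ p ≤ a * x ^ (-(1 - p)) := by
    filter_upwards [eventually_gt_atTop 0] with x hx
    have h1 : (1 + a / x) ^ p ≤ 1 + a / x :=
      Real.rpow_le_self_of_one_le (le_add_of_nonneg_right (div_nonneg ha hx.le)) hp1.le
    have h2 : a + x = x * (1 + a / x) := by field_simp; ring
    have h3 : x ^ (-(1 - p)) = x ^ p / x := by
      rw [show -(1 - p) = p - 1 by ring, Real.rpow_sub_one hx.ne']
    rw [h2, Real.mul_rpow hx.le (by positivity), h3]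
    calc x ^ p * (1 + a / x) ^ p - x ^ p ≤ x ^ p * (1 + a / x) - x ^ p := by
          gcongr
      _ = a * (x ^ p / x) := by field_simp; ring
  have hlim : Tendsto (fun x : ℝ => a * x ^ (-(1 - p))) atTop (𝓝 0) := by
    have := (tendsto_rpow_neg_atTop (by linarith : 0 < 1 - p)).const_mul a
    rwa [mul_zero] at this
  exact tendsto_of_tendsto_of_tendsto_of_le_of_le' tendsto_const_nhds hlim hlow hup

section Orthogonal

variable {E : Type*} [NormedAddCommGroup E] [InnerProductSpace ℝ E] {α : ℝ}

theorem norm_add_rpow_eq {x y : E} (h : ⟪x, y⟫ = 0) :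
    ‖x + y‖ ^ α = (‖x‖ ^ 2 + ‖y‖ ^ 2) ^ (α / 2) := by
  rw [Real.rpow_eq_sq_rpow_half (norm_nonneg _), norm_add_sq_real, h, mul_zero, add_zero]

theorem norm_rpow_le_norm_add_rpow {x y : E} (h : ⟪x, y⟫ = 0) (hα : 0 ≤ α) :
    ‖y‖ ^ α ≤ ‖x + y‖ ^ α := by
  rw [norm_add_rpow_eq h, Real.rpow_eq_sq_rpow_half (norm_nonneg y)]
  gcongr
  exact le_add_of_nonneg_left (sq_nonneg _)

theorem norm_add_rpow_sub_norm_rpow_le {x y : E} (h : ⟪x, y⟫ = 0) (hα0 : 0 ≤ α) (hα2 : α ≤ 2) :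
    ‖x + y‖ ^ α - ‖y‖ ^ α ≤ ‖x‖ ^ α := by
  rw [norm_add_rpow_eq h, Real.rpow_eq_sq_rpow_half (norm_nonneg y),
    Real.rpow_eq_sq_rpow_half (norm_nonneg x), sub_le_iff_le_add]
  exact Real.rpow_add_le_add_rpow (sq_nonneg _) (sq_nonneg _) (by linarith) (by linarith)

theorem tendsto_norm_add_smul_rpow_sub_norm_smul_rpow {x y : E} (h : ⟪x, y⟫ = 0) (hy : y ≠ 0)
    (hα0 : 0 ≤ α) (hα2 : α < 2) :
    Tendsto (fun t : ℝ => ‖x + t • y‖ ^ α - ‖t • y‖ ^ α) atTop (𝓝 0) := by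
  have hxy : ∀ t : ℝ, ⟪x, t • y⟫ = 0 := fun t => by rw [real_inner_smul_right, h, mul_zero]
  have hsq : Tendsto (fun t : ℝ => ‖t • y‖ ^ 2) atTop atTop := by
    simp_rw [norm_smul, mul_pow, Real.norm_eq_abs, sq_abs]
    exact (tendsto_pow_atTop two_ne_zero).atTop_mul_const (by positivity)
  refine ((Real.tendsto_add_rpow_sub_rpow_atTop (p := α / 2) (sq_nonneg ‖x‖) (by linarith)
    (by linarith)).comp hsq).congr fun t => ?_
  simp only [Function.comp_apply, norm_add_rpow_eq (hxy t),
    Real.rpow_eq_sq_rpow_half (norm_nonneg (t • y))]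

theorem ofReal_abs_inner_smul_rpow (u : E) (c : ℝ) (x : E) :
    ENNReal.ofReal (|⟪u, c • x⟫| ^ α)
      = ENNReal.ofReal (|c| ^ α) * ENNReal.ofReal (|⟪u, x⟫| ^ α) := by
  rw [← ENNReal.ofReal_mul (by positivity), real_inner_smul_right, abs_mul,
    Real.mul_rpow (abs_nonneg c) (abs_nonneg _)]

end Orthogonal

theorem Seminorm.continuous_of_finiteDimensional {E : Type*} [NormedAddCommGroup E]
    [NormedSpace ℝ E] [FiniteDimensional ℝ E] (N : Seminorm ℝ E) : Continuous N :=
  continuousOn_univ.1 (N.convexOn.continuousOn isOpen_univ)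

@[fun_prop]
theorem Seminorm.measurable_of_finiteDimensional {E : Type*} [NormedAddCommGroup E]
    [NormedSpace ℝ E] [FiniteDimensional ℝ E] [MeasurableSpace E] [BorelSpace E]
    (N : Seminorm ℝ E) : Measurable N :=
  N.continuous_of_finiteDimensional.measurable

def Seminorm.ker {𝕜 E : Type*} [NormedField 𝕜] [AddCommGroup E] [Module 𝕜 E]
    (N : Seminorm 𝕜 E) : Submodule 𝕜 E where
  carrier := {x | N x = 0}
  add_mem' {x y} hx hy :=
    le_antisymm ((map_add_le_add N x y).trans_eq (by rw [hx, hy, add_zero])) (apply_nonneg N _)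
  zero_mem' := map_zero N
  smul_mem' c x hx := show N (c • x) = 0 by rw [map_smul_eq_mul, show N x = 0 from hx, mul_zero]

section StretchDefect

variable {E : Type*} [NormedAddCommGroup E] [InnerProductSpace ℝ E] (V : Submodule ℝ E)
  [V.HasOrthogonalProjection] {α : ℝ}

noncomputable def Submodule.stretchDefect (α t : ℝ) (s : E) : ℝ≥0∞ :=
  ENNReal.ofReal (‖(V.starProjection + t • Vᗮ.starProjection) s‖ ^ α)
    - ENNReal.ofReal (‖(t • Vᗮ.starProjection) s‖ ^ α)

theorem Submodule.inner_starProjection_smul_starProjection_orthogonal (t : ℝ) (s : E) :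
    ⟪V.starProjection s, t • Vᗮ.starProjection s⟫ = 0 :=
  inner_right_of_mem_orthogonal (V.starProjection_apply_mem s)
    (Vᗮ.smul_mem t (Vᗮ.starProjection_apply_mem s))

theorem Submodule.stretchDefect_eq (t : ℝ) (s : E) :
    V.stretchDefect α t s = ENNReal.ofReal
      (‖V.starProjection s + t • Vᗮ.starProjection s‖ ^ α - ‖t • Vᗮ.starProjection s‖ ^ α) := by
  rw [stretchDefect, ENNReal.ofReal_sub _ (by positivity)]
  rfl

theorem Submodule.stretchDefect_of_mem (hα : 0 < α) (t : ℝ) {s : E} (hs : s ∈ V) :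
    V.stretchDefect α t s = ENNReal.ofReal (‖s‖ ^ α) := by
  rw [V.stretchDefect_eq, V.starProjection_eq_self_iff.2 hs,
    Vᗮ.starProjection_apply_eq_zero_iff.2 (V.le_orthogonal_orthogonal hs)]
  simp [Real.zero_rpow hα.ne']

theorem Submodule.stretchDefect_le (hα0 : 0 ≤ α) (hα2 : α ≤ 2) (t : ℝ) (s : E) :
    V.stretchDefect α t s ≤ ENNReal.ofReal (‖V.starProjection s‖ ^ α) := by
  rw [V.stretchDefect_eq]
  exact ENNReal.ofReal_le_ofReal (norm_add_rpow_sub_norm_rpow_le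
    (V.inner_starProjection_smul_starProjection_orthogonal t s) hα0 hα2)

theorem Submodule.tendsto_stretchDefect (hα0 : 0 ≤ α) (hα2 : α < 2) {s : E} (hs : s ∉ V) :
    Tendsto (fun n : ℕ => V.stretchDefect α n s) atTop (𝓝 0) := by
  have hQ : Vᗮ.starProjection s ≠ 0 := by
    rwa [Ne, Vᗮ.starProjection_apply_eq_zero_iff, V.orthogonal_orthogonal]
  have hPQ : ⟪V.starProjection s, Vᗮ.starProjection s⟫ = 0 := by
    simpa using V.inner_starProjection_smul_starProjection_orthogonal 1 s
  have := ENNReal.tendsto_ofReal ((tendsto_norm_add_smul_rpow_sub_norm_smul_rpow hPQ hQ hα0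
    hα2).comp tendsto_natCast_atTop_atTop)
  rw [ENNReal.ofReal_zero] at this
  exact this.congr fun n => (V.stretchDefect_eq n s).symm

end StretchDefect

section BallAverage

variable {E : Type*} [NormedAddCommGroup E] [InnerProductSpace ℝ E] [FiniteDimensional ℝ E]
  [MeasurableSpace E] [BorelSpace E] {α : ℝ}

theorem measurable_ofReal_abs_inner_rpow (v : E) :
    Measurable fun u : E => ENNReal.ofReal (|⟪u, v⟫| ^ α) := by
  fun_prop

theorem lintegral_ball_abs_inner_rpow_eq_of_norm_eq {v w : E} (h : ‖v‖ = ‖w‖) :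
    ∫⁻ u in ball 0 1, ENNReal.ofReal (|⟪u, v⟫| ^ α)
      = ∫⁻ u in ball 0 1, ENNReal.ofReal (|⟪u, w⟫| ^ α) := by
  set R := Submodule.reflection (ℝ ∙ (v - w))ᗮ
  have hR : ∀ u, ⟪u, v⟫ = ⟪R u, w⟫ := fun u => by
    rw [← Submodule.reflection_sub h, LinearIsometryEquiv.inner_map_map]
  have hball : R ⁻¹' ball 0 1 = ball 0 1 := by
    rw [LinearIsometryEquiv.preimage_ball, map_zero]
  simp_rw [hR]
  have := R.measurePreserving.setLIntegral_comp_preimage_emb R.toHomeomorph.measurableEmbedding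
    (fun u => ENNReal.ofReal (|⟪u, w⟫| ^ α)) (ball 0 1)
  rwa [hball] at this

theorem lintegral_ball_abs_inner_smul_rpow (c : ℝ) (v : E) :
    ∫⁻ u in ball 0 1, ENNReal.ofReal (|⟪u, c • v⟫| ^ α)
      = ENNReal.ofReal (|c| ^ α) * ∫⁻ u in ball 0 1, ENNReal.ofReal (|⟪u, v⟫| ^ α) := by
  simp_rw [ofReal_abs_inner_smul_rpow]
  exact lintegral_const_mul _ (measurable_ofReal_abs_inner_rpow v)

theorem lintegral_ball_abs_inner_rpow (hα : 0 < α) {w : E} (hw : ‖w‖ = 1) (v : E) :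
    ∫⁻ u in ball 0 1, ENNReal.ofReal (|⟪u, v⟫| ^ α)
      = ENNReal.ofReal (‖v‖ ^ α) * ∫⁻ u in ball 0 1, ENNReal.ofReal (|⟪u, w⟫| ^ α) := by
  rcases eq_or_ne v 0 with rfl | hv
  · simp [Real.zero_rpow hα.ne']
  conv_lhs => rw [← smul_inv_smul₀ (norm_ne_zero_iff.2 hv) v]
  rw [lintegral_ball_abs_inner_smul_rpow, abs_norm,
    lintegral_ball_abs_inner_rpow_eq_of_norm_eq (w := w)]
  rw [norm_smul, norm_inv, norm_norm, inv_mul_cancel₀ (norm_ne_zero_iff.2 hv), hw]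

theorem lintegral_ball_abs_inner_rpow_pos {w : E} (hw : ‖w‖ = 1) :
    0 < ∫⁻ u in ball 0 1, ENNReal.ofReal (|⟪u, w⟫| ^ α) := by
  rw [lintegral_pos_iff_support (measurable_ofReal_abs_inner_rpow w),
    Measure.restrict_apply' measurableSet_ball]
  have hopen : IsOpen ({u : E | ⟪u, w⟫ ≠ 0} ∩ ball 0 1) :=
    (isOpen_ne_fun (by fun_prop) continuous_const).inter isOpen_ball
  have hne : ({u : E | ⟪u, w⟫ ≠ 0} ∩ ball 0 1).Nonempty := by
    refine ⟨(2⁻¹ : ℝ) • w, ?_, ?_⟩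
    · simp [real_inner_smul_left, hw]
    · norm_num [norm_smul, hw]
  refine (hopen.measure_pos _ hne).trans_le (measure_mono fun u hu => ?_)
  exact ⟨(ENNReal.ofReal_pos.2 (Real.rpow_pos_of_pos (abs_pos.2 hu.1) _)).ne', hu.2⟩

theorem lintegral_ball_abs_inner_rpow_lt_top (hα : 0 ≤ α) {w : E} (hw : ‖w‖ = 1) :
    ∫⁻ u in ball 0 1, ENNReal.ofReal (|⟪u, w⟫| ^ α) < ∞ := by
  have hle : ∀ u ∈ ball (0 : E) 1, ENNReal.ofReal (|⟪u, w⟫| ^ α) ≤ 1 := fun u hu => by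
    refine ENNReal.ofReal_le_one.2 (Real.rpow_le_one (abs_nonneg _) ?_ hα)
    calc |⟪u, w⟫| ≤ ‖u‖ * ‖w‖ := abs_real_inner_le_norm u w
      _ ≤ 1 := by rw [hw, mul_one]; exact (mem_ball_zero_iff.1 hu).le
  calc ∫⁻ u in ball 0 1, ENNReal.ofReal (|⟪u, w⟫| ^ α) ≤ ∫⁻ _ in ball (0 : E) 1, 1 :=
        setLIntegral_mono' measurableSet_ball hle
    _ < ∞ := by simpa using measure_ball_lt_top

theorem lintegral_ball_lintegral_abs_inner_adjoint_rpow (hα : 0 < α) {w : E} (hw : ‖w‖ = 1)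
    (μ : Measure E) [SFinite μ] (A : E →L[ℝ] E) :
    ∫⁻ u in ball 0 1, ∫⁻ s, ENNReal.ofReal (|⟪A.adjoint u, s⟫| ^ α) ∂μ
      = (∫⁻ s, ENNReal.ofReal (‖A s‖ ^ α) ∂μ)
        * ∫⁻ u in ball 0 1, ENNReal.ofReal (|⟪u, w⟫| ^ α) := by
  have hmeas : Measurable fun p : E × E => ENNReal.ofReal (|⟪A.adjoint p.1, p.2⟫| ^ α) := by
    fun_prop
  rw [lintegral_lintegral_swap hmeas.aemeasurable, ← lintegral_mul_const _ (by fun_prop)]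
  refine lintegral_congr fun s => ?_
  simp_rw [ContinuousLinearMap.adjoint_inner_left]
  exact lintegral_ball_abs_inner_rpow hα hw (A s)

theorem lintegral_norm_rpow_eq_of_lintegral_abs_inner_rpow_eq [Nontrivial E] (hα : 0 < α)
    {μ ν : Measure E} [SFinite μ] [SFinite ν]
    (h : ∀ u, ∫⁻ s, ENNReal.ofReal (|⟪u, s⟫| ^ α) ∂μ = ∫⁻ s, ENNReal.ofReal (|⟪u, s⟫| ^ α) ∂ν)
    (A : E →L[ℝ] E) :
    ∫⁻ s, ENNReal.ofReal (‖A s‖ ^ α) ∂μ = ∫⁻ s, ENNReal.ofReal (‖A s‖ ^ α) ∂ν := by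
  obtain ⟨w, hw⟩ := exists_norm_eq E zero_le_one
  have key := lintegral_ball_lintegral_abs_inner_adjoint_rpow hα hw μ A
  rw [lintegral_congr fun u => h (A.adjoint u),
    lintegral_ball_lintegral_abs_inner_adjoint_rpow hα hw ν A] at key
  exact (ENNReal.mul_left_inj (lintegral_ball_abs_inner_rpow_pos hw).ne'
    (lintegral_ball_abs_inner_rpow_lt_top hα.le hw).ne).1 key.symm

end BallAverage

section FiniteMeasure

variable {E : Type*} [NormedAddCommGroup E] [InnerProductSpace ℝ E] {α : ℝ}

theorem OrthonormalBasis.norm_rpow_le_card_rpow_mul_sum {ι : Type*} [Fintype ι]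
    (b : OrthonormalBasis ι ℝ E) (hα : 0 < α) (x : E) :
    ‖x‖ ^ α ≤ (Fintype.card ι : ℝ) ^ α * ∑ i, |⟪b i, x⟫| ^ α := by
  rcases eq_or_ne x 0 with rfl | hx
  · rw [norm_zero, Real.zero_rpow hα.ne']
    positivity
  have hsum : ‖x‖ ≤ ∑ i, |⟪b i, x⟫| := by
    conv_lhs => rw [← b.sum_repr' x]
    refine (norm_sum_le _ _).trans_eq (Finset.sum_congr rfl fun i _ => ?_)
    rw [norm_smul, b.orthonormal.1 i, mul_one, Real.norm_eq_abs]
  have hι : (Finset.univ : Finset ι).Nonempty := by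
    by_contra h
    rw [Finset.not_nonempty_iff_eq_empty.1 h, Finset.sum_empty] at hsum
    exact hx (norm_le_zero_iff.1 hsum)
  have hcard : (0 : ℝ) < Fintype.card ι := by
    rw [← Finset.card_univ]
    exact_mod_cast Finset.card_pos.2 hι
  obtain ⟨i, -, hi⟩ : ∃ i ∈ Finset.univ, ‖x‖ / Fintype.card ι ≤ |⟪b i, x⟫| := by
    refine Finset.exists_le_of_sum_le hι ?_
    rwa [Finset.sum_const, Finset.card_univ, nsmul_eq_mul, mul_div_cancel₀ _ hcard.ne']
  calc ‖x‖ ^ α = (Fintype.card ι : ℝ) ^ α * (‖x‖ / Fintype.card ι) ^ α := by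
        rw [← Real.mul_rpow hcard.le (by positivity), mul_div_cancel₀ _ hcard.ne']
    _ ≤ (Fintype.card ι : ℝ) ^ α * |⟪b i, x⟫| ^ α := by gcongr
    _ ≤ (Fintype.card ι : ℝ) ^ α * ∑ i, |⟪b i, x⟫| ^ α := by
        gcongr
        exact Finset.single_le_sum (f := fun j => |⟪b j, x⟫| ^ α) (fun j _ => by positivity)
          (Finset.mem_univ i)

theorem isFiniteMeasure_of_lintegral_abs_inner_rpow_lt_top [FiniteDimensional ℝ E]
    [MeasurableSpace E] [BorelSpace E] (hα : 0 < α) {ν : Measure E} {r : ℝ} (hr : 0 < r)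
    (hν : ∀ᵐ s ∂ν, r ≤ ‖s‖) (h : ∀ u, ∫⁻ s, ENNReal.ofReal (|⟪u, s⟫| ^ α) ∂ν < ∞) :
    IsFiniteMeasure ν := by
  set b := stdOrthonormalBasis ℝ E
  set c := (r ^ α)⁻¹ * (Fintype.card (Fin (Module.finrank ℝ E)) : ℝ) ^ α
  have hle : ∀ᵐ s ∂ν, 1 ≤ ENNReal.ofReal c * ∑ i, ENNReal.ofReal (|⟪b i, s⟫| ^ α) := by
    filter_upwards [hν] with s hs
    rw [← ENNReal.ofReal_sum_of_nonneg fun i _ => by positivity, ← ENNReal.ofReal_mul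
      (by positivity), ENNReal.one_le_ofReal, mul_assoc, le_inv_mul_iff₀ (by positivity),
      mul_one]
    exact (Real.rpow_le_rpow hr.le hs hα.le).trans (b.norm_rpow_le_card_rpow_mul_sum hα s)
  refine ⟨?_⟩
  calc ν Set.univ = ∫⁻ _, 1 ∂ν := (lintegral_one).symm
    _ ≤ ∫⁻ s, ENNReal.ofReal c * ∑ i, ENNReal.ofReal (|⟪b i, s⟫| ^ α) ∂ν := lintegral_mono_ae hle
    _ = ENNReal.ofReal c * ∑ i, ∫⁻ s, ENNReal.ofReal (|⟪b i, s⟫| ^ α) ∂ν := by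
        rw [lintegral_const_mul _ (by fun_prop), lintegral_finsetSum _ fun i _ => by fun_prop]
    _ < ∞ := ENNReal.mul_lt_top ENNReal.ofReal_lt_top (ENNReal.sum_lt_top.2 fun i _ => h (b i))

end FiniteMeasure

theorem lintegral_ofReal_norm_rpow_lt_top {E F : Type*} [NormedAddCommGroup E] [NormedSpace ℝ E]
    [NormedAddCommGroup F] [NormedSpace ℝ F] [MeasurableSpace E] {α : ℝ} (hα : 0 ≤ α)
    {μ : Measure E} [IsFiniteMeasure μ] (hμ : ∀ᵐ s ∂μ, ‖s‖ ≤ 1) (A : E →L[ℝ] F) :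
    ∫⁻ s, ENNReal.ofReal (‖A s‖ ^ α) ∂μ < ∞ := by
  have hle : ∀ᵐ s ∂μ, ENNReal.ofReal (‖A s‖ ^ α) ≤ ENNReal.ofReal (‖A‖ ^ α) :=
    hμ.mono fun s hs => ENNReal.ofReal_le_ofReal (Real.rpow_le_rpow (norm_nonneg _)
      ((A.le_opNorm s).trans (mul_le_of_le_one_right (norm_nonneg A) hs)) hα)
  refine (lintegral_mono_ae hle).trans_lt ?_
  rw [lintegral_const]
  exact ENNReal.mul_lt_top ENNReal.ofReal_lt_top (measure_lt_top μ _)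

section StretchDefectIntegral

variable {E : Type*} [NormedAddCommGroup E] [InnerProductSpace ℝ E] [MeasurableSpace E]
  [BorelSpace E] (V : Submodule ℝ E) [V.HasOrthogonalProjection] {α : ℝ}

theorem Submodule.lintegral_stretchDefect_eq {μ ν : Measure E}
    (h : ∀ A : E →L[ℝ] E,
      ∫⁻ s, ENNReal.ofReal (‖A s‖ ^ α) ∂μ = ∫⁻ s, ENNReal.ofReal (‖A s‖ ^ α) ∂ν)
    (hα : 0 ≤ α) (t : ℝ) (hfin : ∫⁻ s, ENNReal.ofReal (‖(t • Vᗮ.starProjection) s‖ ^ α) ∂μ ≠ ∞) :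
    ∫⁻ s, V.stretchDefect α t s ∂μ = ∫⁻ s, V.stretchDefect α t s ∂ν := by
  have hle : ∀ m : Measure E, (fun s => ENNReal.ofReal (‖(t • Vᗮ.starProjection) s‖ ^ α)) ≤ᵐ[m]
      fun s => ENNReal.ofReal (‖(V.starProjection + t • Vᗮ.starProjection) s‖ ^ α) :=
    fun m => Eventually.of_forall fun s => ENNReal.ofReal_le_ofReal
      (norm_rpow_le_norm_add_rpow (V.inner_starProjection_smul_starProjection_orthogonal t s) hα)
  simp only [Submodule.stretchDefect]
  rw [lintegral_sub (by fun_prop) hfin (hle μ), lintegral_sub (by fun_prop) (h _ ▸ hfin) (hle ν),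
    h, h]

end StretchDefectIntegral

theorem measure_ker_eq_zero_of_lintegral_abs_inner_rpow_eq {E : Type*} [NormedAddCommGroup E]
    [InnerProductSpace ℝ E] [FiniteDimensional ℝ E] [Nontrivial E] [MeasurableSpace E]
    [BorelSpace E] {α : ℝ} (hα0 : 0 < α) (hα2 : α < 2) (N : Seminorm ℝ E) {μ ν : Measure E}
    [IsFiniteMeasure μ] (hμ : ∀ᵐ s ∂μ, ‖s‖ = 1) (hν : ∀ᵐ s ∂ν, N s = 1)
    (hνfin : ∀ u, ∫⁻ s, ENNReal.ofReal (|⟪u, s⟫| ^ α) ∂ν < ∞)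
    (h : ∀ u, ∫⁻ s, ENNReal.ofReal (|⟪u, s⟫| ^ α) ∂μ = ∫⁻ s, ENNReal.ofReal (|⟪u, s⟫| ^ α) ∂ν) :
    μ N.ker = 0 := by
  obtain ⟨M, hM, hNM⟩ := N.bound_of_continuous_normedSpace N.continuous_of_finiteDimensional
  -- Tonelli in the ball-averaging step needs `ν` to be s-finite.
  have : IsFiniteMeasure ν := by
    refine isFiniteMeasure_of_lintegral_abs_inner_rpow_lt_top hα0 (inv_pos.2 hM)
      (hν.mono fun s hs => ?_) hνfin
    rw [inv_le_iff_one_le_mul₀' hM, ← hs]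
    exact hNM s
  have hA := lintegral_norm_rpow_eq_of_lintegral_abs_inner_rpow_eq hα0 h
  have hfin (A : E →L[ℝ] E) : ∫⁻ s, ENNReal.ofReal (‖A s‖ ^ α) ∂μ ≠ ∞ :=
    (lintegral_ofReal_norm_rpow_lt_top hα0.le (hμ.mono fun s hs => hs.le) A).ne
  set V := N.ker
  have hlow (n : ℕ) : μ V ≤ ∫⁻ s, V.stretchDefect α n s ∂μ := by
    rw [← lintegral_indicator_one V.closed_of_finiteDimensional.measurableSet]
    refine lintegral_mono_ae (hμ.mono fun s hs => ?_)
    by_cases hsV : s ∈ V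
    · rw [Set.indicator_of_mem hsV, V.stretchDefect_of_mem hα0 _ hsV, hs, Real.one_rpow,
        ENNReal.ofReal_one, Pi.one_apply]
    · rw [Set.indicator_of_notMem hsV]
      exact zero_le
  have hlim : Tendsto (fun n : ℕ => ∫⁻ s, V.stretchDefect α n s ∂ν) atTop (𝓝 0) := by
    have := tendsto_lintegral_of_dominated_convergence _
      (fun n => by unfold Submodule.stretchDefect; fun_prop)
      (fun n => Eventually.of_forall (V.stretchDefect_le hα0.le hα2.le n))
      (hA V.starProjection ▸ hfin _)
      (hν.mono fun s hs => V.tendsto_stretchDefect hα0.le hα2 fun hsV => by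
        rw [show N s = 0 from hsV] at hs
        exact zero_ne_one hs)
    rwa [lintegral_zero] at this
  refine le_antisymm (ge_of_tendsto' hlim fun n => ?_) zero_le
  exact (hlow n).trans_eq (V.lintegral_stretchDefect_eq hA hα0.le n (hfin _))

section Rescaling

variable {E : Type*} [NormedAddCommGroup E] [NormedSpace ℝ E] [FiniteDimensional ℝ E]
  [MeasurableSpace E] [BorelSpace E] {α : ℝ}

noncomputable def Seminorm.unitRescaling (N : Seminorm ℝ E) (α : ℝ) (μ : Measure E) :
    Measure E :=
  (μ.withDensity fun x => ENNReal.ofReal (N x ^ α)).map fun x => (N x)⁻¹ • x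

variable (N : Seminorm ℝ E)

theorem Seminorm.measurable_inv_smul : Measurable fun x : E => (N x)⁻¹ • x := by
  fun_prop

theorem Seminorm.lintegral_unitRescaling (μ : Measure E) {f : E → ℝ≥0∞} (hf : Measurable f) :
    ∫⁻ x, f x ∂N.unitRescaling α μ = ∫⁻ x, ENNReal.ofReal (N x ^ α) * f ((N x)⁻¹ • x) ∂μ := by
  rw [unitRescaling, lintegral_map hf N.measurable_inv_smul]
  exact lintegral_withDensity_eq_lintegral_mul _ (by fun_prop) (hf.comp N.measurable_inv_smul)

theorem Seminorm.unitRescaling_compl_eq_zero (hα : 0 < α) (μ : Measure E) :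
    N.unitRescaling α μ {x | N x = 1}ᶜ = 0 := by
  have hmeas : MeasurableSet {x : E | N x = 1} :=
    measurableSet_eq_fun (by fun_prop) measurable_const
  rw [← lintegral_indicator_one hmeas.compl, N.lintegral_unitRescaling μ
    (measurable_one.indicator hmeas.compl)]
  refine (lintegral_congr fun x => ?_).trans lintegral_zero
  rcases (apply_nonneg N x).eq_or_lt with hx | hx
  · simp [← hx, Real.zero_rpow hα.ne']
  · simp [map_smul_eq_mul, abs_of_pos hx, hx.ne']

theorem Seminorm.map_neg_unitRescaling {μ : Measure E} (hμ : μ.map (fun x => -x) = μ) :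
    (N.unitRescaling α μ).map (fun x => -x) = N.unitRescaling α μ := by
  refine Measure.ext fun A hA => ?_
  have hf : Measurable (A.indicator (1 : E → ℝ≥0∞)) := measurable_one.indicator hA
  rw [← lintegral_indicator_one hA, ← lintegral_indicator_one hA, lintegral_map hf measurable_neg,
    N.lintegral_unitRescaling μ (f := fun x => A.indicator 1 (-x)) (hf.comp measurable_neg),
    N.lintegral_unitRescaling μ hf]
  conv_rhs => rw [← hμ]
  rw [lintegral_map (by fun_prop) measurable_neg]
  simp [map_neg_eq_map]

theorem Seminorm.lintegral_unitRescaling_of_homogeneous {μ : Measure E}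
    (hμ : μ {x | N x = 0} = 0) {f : E → ℝ≥0∞} (hf : Measurable f)
    (hhom : ∀ c : ℝ, 0 < c → ∀ x, f (c • x) = ENNReal.ofReal (c ^ α) * f x) :
    ∫⁻ x, f x ∂N.unitRescaling α μ = ∫⁻ x, f x ∂μ := by
  rw [N.lintegral_unitRescaling μ hf]
  refine lintegral_congr_ae ((measure_eq_zero_iff_ae_notMem.1 hμ).mono fun x hx => ?_)
  have hx : 0 < N x := (apply_nonneg N x).lt_of_ne (Ne.symm hx)
  dsimp only
  rw [hhom _ (inv_pos.2 hx), ← mul_assoc, ← ENNReal.ofReal_mul (by positivity),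
    Real.inv_rpow hx.le, mul_inv_cancel₀ (by positivity), ENNReal.ofReal_one, one_mul]

end Rescaling

theorem MeasureTheory.Measure.map_neg_restrict_of_neg_eq {E : Type*} [InvolutiveNeg E] [MeasurableSpace E]
    [MeasurableNeg E] {μ : Measure E} (hμ : μ.map (fun x => -x) = μ) {s : Set E}
    (hs : MeasurableSet s) (hneg : -s = s) :
    (μ.restrict s).map (fun x => -x) = μ.restrict s := by
  conv_lhs => rw [← hneg]
  rw [← Set.neg_preimage, ← Measure.restrict_map measurable_neg hs, hμ]

theorem stmt0_general (d : ℕ) (hd : 1 ≤ d) (α : ℝ) (hα0 : 0 < α) (hα2 : α < 2)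
    (N : Seminorm ℝ (EuclideanSpace ℝ (Fin d)))
    (S K C : Set (EuclideanSpace ℝ (Fin d)))
    (hS : S = {s : EuclideanSpace ℝ (Fin d) | ‖s‖ = 1})
    (hK : K = {s ∈ S | N s = 0})
    (hC : C = {s : EuclideanSpace ℝ (Fin d) | N s = 1})
    (Γ : Measure (EuclideanSpace ℝ (Fin d))) [IsFiniteMeasure Γ]
    (hΓsym : Γ.map (fun x => -x) = Γ) :
    (∃ γ : Measure (EuclideanSpace ℝ (Fin d)),
        γ.map (fun x => -x) = γ ∧ γ Cᶜ = 0 ∧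
        (∀ u : EuclideanSpace ℝ (Fin d),
          ∫⁻ s in C, ENNReal.ofReal (|⟪u, s⟫| ^ α) ∂γ < ⊤) ∧
        (∀ u : EuclideanSpace ℝ (Fin d),
          ∫⁻ s in S, ENNReal.ofReal (|⟪u, s⟫| ^ α) ∂Γ
            = ∫⁻ s in C, ENNReal.ofReal (|⟪u, s⟫| ^ α) ∂γ)) ↔
      Γ K = 0 := by
  have : Nonempty (Fin d) := ⟨⟨0, hd⟩⟩
  have hSmeas : MeasurableSet S := hS ▸ measurableSet_eq_fun measurable_norm measurable_const
  have hCmeas : MeasurableSet C := hC ▸ measurableSet_eq_fun (by fun_prop) measurable_const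
  have hμ : ∀ᵐ s ∂Γ.restrict S, ‖s‖ = 1 :=
    (ae_restrict_mem hSmeas).mono fun s hs => by rwa [hS] at hs
  have hΓK : Γ K = Γ.restrict S N.ker := by
    rw [Measure.restrict_apply' hSmeas, hK]
    exact congrArg Γ (Set.ext fun s => and_comm)
  rw [hΓK]
  constructor
  · rintro ⟨γ, -, -, hγfin, hγ⟩
    exact measure_ker_eq_zero_of_lintegral_abs_inner_rpow_eq hα0 hα2 N hμ
      ((ae_restrict_mem hCmeas).mono fun s hs => by rwa [hC] at hs) hγfin hγ
  · intro hker
    have hγC : N.unitRescaling α (Γ.restrict S) Cᶜ = 0 :=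
      hC ▸ N.unitRescaling_compl_eq_zero hα0 (Γ.restrict S)
    have hγ (u) : ∫⁻ s in S, ENNReal.ofReal (|⟪u, s⟫| ^ α) ∂Γ
        = ∫⁻ s in C, ENNReal.ofReal (|⟪u, s⟫| ^ α) ∂N.unitRescaling α (Γ.restrict S) := by
      rw [Measure.restrict_eq_self_of_ae_mem (mem_ae_iff.2 hγC),
        N.lintegral_unitRescaling_of_homogeneous hker (by fun_prop)
          fun c hc x => by rw [ofReal_abs_inner_smul_rpow, abs_of_pos hc]]
    refine ⟨_, N.map_neg_unitRescaling ?_, hγC, fun u => hγ u ▸ ?_, hγ⟩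
    · refine Measure.map_neg_restrict_of_neg_eq hΓsym hSmeas ?_
      rw [hS]
      ext s
      simp
    · simpa using lintegral_ofReal_norm_rpow_lt_top hα0.le (hμ.mono fun s hs => hs.le)
        (innerSL ℝ u)

theorem stmt0 (d : ℕ) (hd : 1 ≤ d) (α : ℝ) (hα0 : 0 < α) (hα2 : α < 2)
    (N : Seminorm ℝ (EuclideanSpace ℝ (Fin d)))
    (S K C : Set (EuclideanSpace ℝ (Fin d)))
    (hS : S = {s : EuclideanSpace ℝ (Fin d) | ‖s‖ = 1})
    (hK : K = {s ∈ S | N s = 0})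
    (hC : C = {s : EuclideanSpace ℝ (Fin d) | N s = 1})
    (Γ : Measure (EuclideanSpace ℝ (Fin d))) [IsFiniteMeasure Γ]
    (hΓS : Γ Sᶜ = 0)
    (hΓsym : Γ.map (fun x => -x) = Γ) :
    (∃ γ : Measure (EuclideanSpace ℝ (Fin d)),
        γ.map (fun x => -x) = γ ∧ γ Cᶜ = 0 ∧
        (∀ u : EuclideanSpace ℝ (Fin d),
          ∫⁻ s in C, ENNReal.ofReal (|⟪u, s⟫| ^ α) ∂γ < ⊤) ∧
        (∀ u : EuclideanSpace ℝ (Fin d),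
          ∫⁻ s in S, ENNReal.ofReal (|⟪u, s⟫| ^ α) ∂Γ
            = ∫⁻ s in C, ENNReal.ofReal (|⟪u, s⟫| ^ α) ∂γ)) ↔
      Γ K = 0 :=
  stmt0_general d hd α hα0 hα2 N S K C hS hK hC Γ hΓsym
end

section
/- Let d ≥ 1, α > 0, N a seminorm on ℝ^d, S_d the Euclidean unit sphere, K = {s ∈ S_d : N(s) = 0} and C = {s ∈ ℝ^d : N(s) = 1}. Let Γ be a finite Borel measure on S_d with Γ(K) = 0, and let γ be the pushforward, under the map T(s) = N(s)^{-1} s defined on S_d ∖ K, of the measure having density s ↦ N(s)^α with respect to the restriction of Γ to S_d ∖ K. Then γ is concentrated on C and, for every u ∈ ℝ^d, ∫_C |⟨u,s⟩|^α dγ(s) = ∫_{S_d} |⟨u,s⟩|^α dΓ(s), and this quantity is finite. -/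
open MeasureTheory
open scoped RealInnerProductSpace

/-! The map `s ↦ N(s)⁻¹ • s` sends `S \ K` into `C`, and the density `N ^ α` exactly
compensates the rescaling for the positively `α`-homogeneous integrand `|⟪u, ·⟫| ^ α`. Since `K`
is `Γ`-null, integrating over `S \ K` is the same as over `S`, and on the unit sphere the
integrand is bounded by `‖u‖ ^ α`, whence finiteness. -/

section InnerProduct

variable {E : Type*} [NormedAddCommGroup E] [InnerProductSpace ℝ E]

theorem ofReal_abs_inner_smul_right_rpow (u s : E) {c : ℝ} (hc : 0 ≤ c) (α : ℝ) :
    ENNReal.ofReal (|⟪u, c • s⟫| ^ α)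
      = ENNReal.ofReal (c ^ α) * ENNReal.ofReal (|⟪u, s⟫| ^ α) := by
  rw [real_inner_smul_right, abs_mul, abs_of_nonneg hc, Real.mul_rpow hc (abs_nonneg _),
    ENNReal.ofReal_mul (Real.rpow_nonneg hc α)]

theorem setLIntegral_ofReal_abs_inner_rpow_lt_top [MeasurableSpace E] (μ : Measure E)
    [IsFiniteMeasure μ] (u : E) {α : ℝ} (hα : 0 ≤ α) {A : Set E} (hA : ∀ s ∈ A, ‖s‖ ≤ 1) :
    ∫⁻ s in A, ENNReal.ofReal (|⟪u, s⟫| ^ α) ∂μ < ⊤ := by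
  refine setLIntegral_lt_top_of_le_nnreal (measure_ne_top μ A)
    ⟨(‖u‖ ^ α).toNNReal, fun s hs => ENNReal.ofReal_le_ofReal ?_⟩
  have hinner : |⟪u, s⟫| ≤ ‖u‖ :=
    (abs_real_inner_le_norm u s).trans (mul_le_of_le_one_right (norm_nonneg u) (hA s hs))
  exact Real.rpow_le_rpow (abs_nonneg _) hinner hα

end InnerProduct

namespace Seminorm

variable {E : Type*} [NormedAddCommGroup E] [NormedSpace ℝ E] (N : Seminorm ℝ E)

theorem continuous_of_finiteDimensional_s1 [FiniteDimensional ℝ E] : Continuous N :=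
  continuousOn_univ.mp (N.convexOn.continuousOn isOpen_univ)

theorem apply_inv_smul_self {s : E} (hs : N s ≠ 0) : N ((N s)⁻¹ • s) = 1 := by
  rw [map_smul_eq_mul, norm_inv, Real.norm_of_nonneg (apply_nonneg N s), inv_mul_cancel₀ hs]

variable [FiniteDimensional ℝ E] [MeasurableSpace E] [BorelSpace E]

theorem measurable_inv_smul_self : Measurable fun s => (N s)⁻¹ • s :=
  N.continuous_of_finiteDimensional_s1.measurable.inv.smul measurable_id

theorem ae_map_inv_smul_self {ν : Measure E} (hν : ∀ᵐ s ∂ν, N s ≠ 0) :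
    ∀ᵐ s ∂ν.map (fun s => (N s)⁻¹ • s), N s = 1 := by
  rw [ae_map_iff (p := fun s => N s = 1) N.measurable_inv_smul_self.aemeasurable
    (N.continuous_of_finiteDimensional_s1.measurable (measurableSet_singleton 1))]
  filter_upwards [hν] with s hs using N.apply_inv_smul_self hs

theorem lintegral_map_inv_smul_withDensity {μ : Measure E} {A : Set E} (hA : MeasurableSet A)
    (hNA : ∀ s ∈ A, N s ≠ 0) {α : ℝ} {f : E → ENNReal} (hf : Measurable f)
    (hhom : ∀ c : ℝ, 0 ≤ c → ∀ s, f (c • s) = ENNReal.ofReal (c ^ α) * f s) :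
    ∫⁻ s, f s ∂((μ.restrict A).withDensity fun s => ENNReal.ofReal (N s ^ α)).map
        (fun s => (N s)⁻¹ • s)
      = ∫⁻ s in A, f s ∂μ := by
  have hfT : Measurable fun s => f ((N s)⁻¹ • s) := hf.comp N.measurable_inv_smul_self
  rw [lintegral_map hf N.measurable_inv_smul_self, lintegral_withDensity_eq_lintegral_mul _
    (N.continuous_of_finiteDimensional_s1.measurable.pow_const α).ennreal_ofReal hfT]
  refine setLIntegral_congr_fun hA fun s hs => ?_
  have hpos : 0 < N s := (apply_nonneg N s).lt_of_ne' (hNA s hs)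
  rw [Pi.mul_apply, hhom _ (inv_nonneg.mpr hpos.le), ← mul_assoc,
    ← ENNReal.ofReal_mul (Real.rpow_nonneg hpos.le α),
    ← Real.mul_rpow hpos.le (inv_nonneg.mpr hpos.le), mul_inv_cancel₀ hpos.ne',
    Real.one_rpow, ENNReal.ofReal_one, one_mul]

end Seminorm

theorem stmt1_general (d : ℕ) (α : ℝ) (hα : 0 < α)
    (N : Seminorm ℝ (EuclideanSpace ℝ (Fin d)))
    (S K C : Set (EuclideanSpace ℝ (Fin d)))
    (hS : S = {s : EuclideanSpace ℝ (Fin d) | ‖s‖ = 1})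
    (hK : K = {s ∈ S | N s = 0})
    (hC : C = {s : EuclideanSpace ℝ (Fin d) | N s = 1})
    (Γ : Measure (EuclideanSpace ℝ (Fin d))) [IsFiniteMeasure Γ]
    (hΓK : Γ K = 0)
    (γ : Measure (EuclideanSpace ℝ (Fin d)))
    (hγ : γ = Measure.map (fun s => (N s)⁻¹ • s)
        ((Γ.restrict (S \ K)).withDensity fun s => ENNReal.ofReal (N s ^ α))) :
    γ Cᶜ = 0 ∧
      ∀ u : EuclideanSpace ℝ (Fin d),
        (∫⁻ s in C, ENNReal.ofReal (|⟪u, s⟫| ^ α) ∂γ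
          = ∫⁻ s in S, ENNReal.ofReal (|⟪u, s⟫| ^ α) ∂Γ) ∧
        ∫⁻ s in S, ENNReal.ofReal (|⟪u, s⟫| ^ α) ∂Γ < ⊤ := by
  have hNm := N.continuous_of_finiteDimensional_s1.measurable
  have hSK : MeasurableSet (S \ K) := by
    rw [hK, hS]
    exact (measurable_norm (measurableSet_singleton 1)).diff
      ((measurable_norm (measurableSet_singleton 1)).inter (hNm (measurableSet_singleton 0)))
  have hNSK : ∀ s ∈ S \ K, N s ≠ 0 := fun s ⟨hsS, hsK⟩ hs0 => hsK (hK ▸ ⟨hsS, hs0⟩)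
  have hγC : ∀ᵐ s ∂γ, s ∈ C := by
    rw [hγ, hC]
    exact N.ae_map_inv_smul_self
      ((withDensity_absolutelyContinuous _ _).ae_le (ae_restrict_of_forall_mem hSK hNSK))
  refine ⟨ae_iff.mp hγC, fun u => ⟨?_, ?_⟩⟩
  · rw [Measure.restrict_eq_self_of_ae_mem hγC, hγ,
      N.lintegral_map_inv_smul_withDensity hSK hNSK
        (by fun_prop) (fun c hc s => ofReal_abs_inner_smul_right_rpow u s hc α)]
    exact setLIntegral_congr (sdiff_ae_eq_self.mpr (measure_mono_null Set.inter_subset_right hΓK))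
  · refine setLIntegral_ofReal_abs_inner_rpow_lt_top Γ u hα.le fun s hs => ?_
    rw [hS] at hs
    exact hs.le

theorem stmt1 (d : ℕ) (hd : 1 ≤ d) (α : ℝ) (hα : 0 < α)
    (N : Seminorm ℝ (EuclideanSpace ℝ (Fin d)))
    (S K C : Set (EuclideanSpace ℝ (Fin d)))
    (hS : S = {s : EuclideanSpace ℝ (Fin d) | ‖s‖ = 1})
    (hK : K = {s ∈ S | N s = 0})
    (hC : C = {s : EuclideanSpace ℝ (Fin d) | N s = 1})
    (Γ : Measure (EuclideanSpace ℝ (Fin d))) [IsFiniteMeasure Γ]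
    (hΓS : Γ Sᶜ = 0) (hΓK : Γ K = 0)
    (γ : Measure (EuclideanSpace ℝ (Fin d)))
    (hγ : γ = Measure.map (fun s => (N s)⁻¹ • s)
        ((Γ.restrict (S \ K)).withDensity fun s => ENNReal.ofReal (N s ^ α))) :
    γ Cᶜ = 0 ∧
      ∀ u : EuclideanSpace ℝ (Fin d),
        (∫⁻ s in C, ENNReal.ofReal (|⟪u, s⟫| ^ α) ∂γ
          = ∫⁻ s in S, ENNReal.ofReal (|⟪u, s⟫| ^ α) ∂Γ) ∧
        ∫⁻ s in S, ENNReal.ofReal (|⟪u, s⟫| ^ α) ∂Γ < ⊤ :=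
  stmt1_general d α hα N S K C hS hK hC Γ hΓK γ hγ
end

section
/- Let d ≥ 1, N a seminorm on ℝ^d, C = {s ∈ ℝ^d : N(s) = 1}, and let γ be a Borel measure on ℝ^d concentrated on C such that for every u ∈ ℝ^d one has ∫_C |⟨u,s⟩| · |log|⟨u,s⟩|| dγ(s) < ∞. Then ∫_C ‖s‖₂ · |log ‖s‖₂| dγ(s) < ∞. -/
open MeasureTheory
open scoped RealInnerProductSpace

noncomputable def phi (x : ℝ) : ℝ := x * |Real.log x|

lemma phi_nonneg {x : ℝ} (hx : 0 ≤ x) : 0 ≤ phi x := mul_nonneg hx (abs_nonneg _)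

lemma L1 {x : ℝ} (hx : 0 ≤ x) : x * Real.log 2 ≤ phi x + phi (2 * x) := by
  rcases eq_or_lt_of_le hx with h0 | hxpos
  · simp [phi, ← h0]
  have hA : (0:ℝ) ≤ x * |Real.log x| := mul_nonneg hx (abs_nonneg _)
  have hB' : Real.log 2 - |Real.log x| ≤ |Real.log (2 * x)| := by
    rw [Real.log_mul two_ne_zero (ne_of_gt hxpos)]
    have h1 := abs_add_le (Real.log 2 + Real.log x) (-Real.log x)
    simp only [add_neg_cancel_right, abs_neg] at h1
    have h2 : |Real.log 2| = Real.log 2 := abs_of_pos (Real.log_pos one_lt_two)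
    linarith
  have hxB := mul_le_mul_of_nonneg_left hB' hx
  have hB0 : (0:ℝ) ≤ x * |Real.log (2*x)| := mul_nonneg hx (abs_nonneg _)
  have : phi (2*x) = 2 * (x * |Real.log (2*x)|) := by unfold phi; ring
  unfold phi
  nlinarith

lemma L2 {d : ℕ} (hd : 1 ≤ d) (a : Fin d → ℝ) (x : ℝ) (ha : ∀ i, 0 ≤ a i)
    (hax : ∀ i, a i ≤ x) (hxs : x ≤ ∑ i, a i) :
    phi x ≤ d * ∑ i, phi (a i) + Real.log d * ∑ i, a i := by
  have i0 : Fin d := ⟨0, hd⟩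
  have hx0 : 0 ≤ x := le_trans (ha i0) (hax i0)
  have hd1 : (1:ℝ) ≤ d := by exact_mod_cast hd
  have hlogd : 0 ≤ Real.log d := Real.log_nonneg hd1
  have hsumφ : 0 ≤ ∑ i, phi (a i) := Finset.sum_nonneg fun i _ => phi_nonneg (ha i)
  have hsuma : 0 ≤ ∑ i, a i := Finset.sum_nonneg fun i _ => ha i
  rcases le_or_gt x 1 with hx1 | hx1
  · rcases eq_or_lt_of_le hx0 with h0 | hxpos
    · have : phi x = 0 := by simp [phi, ← h0]
      rw [this]; positivity
    · have hlx : |Real.log x| = -Real.log x :=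
        abs_of_nonpos (Real.log_nonpos hx0 hx1)
      have key : ∀ i, a i * (-Real.log x) ≤ phi (a i) := by
        intro i
        rcases eq_or_lt_of_le (ha i) with h0 | hpos
        · simp [phi, ← h0]
        · have hle : Real.log (a i) ≤ Real.log x := Real.log_le_log hpos (hax i)
          have : -Real.log x ≤ |Real.log (a i)| := by
            have := neg_le_abs (Real.log (a i)); linarith
          exact mul_le_mul_of_nonneg_left this (ha i)
      have hnl : 0 ≤ -Real.log x := by
        have := Real.log_nonpos hx0 hx1; linarith
      calc phi x = x * (-Real.log x) := by rw [phi, hlx]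
        _ ≤ (∑ i, a i) * (-Real.log x) := mul_le_mul_of_nonneg_right hxs hnl
        _ = ∑ i, a i * (-Real.log x) := by rw [Finset.sum_mul]
        _ ≤ ∑ i, phi (a i) := Finset.sum_le_sum fun i _ => key i
        _ ≤ d * ∑ i, phi (a i) + Real.log d * ∑ i, a i := by nlinarith
  · obtain ⟨j, -, hj⟩ := Finset.exists_max_image Finset.univ a ⟨i0, Finset.mem_univ i0⟩
    have hsum_le : ∑ i, a i ≤ d * a j := by
      calc ∑ i, a i ≤ ∑ _i : Fin d, a j :=
            Finset.sum_le_sum fun i _ => hj i (Finset.mem_univ i)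
        _ = d * a j := by simp [Finset.sum_const, nsmul_eq_mul]
    have hxdj : x ≤ d * a j := le_trans hxs hsum_le
    have hd0 : (0:ℝ) < d := by linarith
    have haj : 0 < a j := by nlinarith [ha j]
    have hlogx : |Real.log x| = Real.log x := abs_of_nonneg (Real.log_nonneg hx1.le)
    have hlx_le : Real.log x ≤ Real.log d + Real.log (a j) := by
      rw [← Real.log_mul (ne_of_gt hd0) (ne_of_gt haj)]
      exact Real.log_le_log (lt_trans one_pos hx1) hxdj
    have h1 : x * Real.log x ≤ x * Real.log d + x * Real.log (a j) := by nlinarith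
    have h2 : x * Real.log d ≤ (∑ i, a i) * Real.log d :=
      mul_le_mul_of_nonneg_right hxs hlogd
    have h3 : x * Real.log (a j) ≤ d * phi (a j) := by
      rcases le_or_gt (Real.log (a j)) 0 with hneg | hpos
      · have hle0 : x * Real.log (a j) ≤ 0 := mul_nonpos_of_nonneg_of_nonpos hx0 hneg
        have : 0 ≤ (d:ℝ) * phi (a j) := mul_nonneg hd0.le (phi_nonneg haj.le)
        linarith
      · have habs := le_abs_self (Real.log (a j))
        calc x * Real.log (a j) ≤ (d * a j) * Real.log (a j) :=
              mul_le_mul_of_nonneg_right hxdj hpos.le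
          _ ≤ d * phi (a j) := by unfold phi; nlinarith
    have h4 : phi (a j) ≤ ∑ i, phi (a i) :=
      Finset.single_le_sum (fun i _ => phi_nonneg (ha i)) (Finset.mem_univ j)
    have h5 : (d:ℝ) * phi (a j) ≤ d * ∑ i, phi (a i) :=
      mul_le_mul_of_nonneg_left h4 hd0.le
    calc phi x = x * Real.log x := by rw [phi, hlogx]
      _ ≤ d * ∑ i, phi (a i) + Real.log d * ∑ i, a i := by nlinarith

lemma coord_le_norm {d : ℕ} (s : EuclideanSpace ℝ (Fin d)) (i : Fin d) :
    |s i| ≤ ‖s‖ := by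
  rw [EuclideanSpace.norm_eq]
  have h1 : |s i| = Real.sqrt (‖s i‖ ^ 2) := by
    rw [Real.sqrt_sq_eq_abs]; simp [Real.norm_eq_abs, abs_abs]
  rw [h1]
  apply Real.sqrt_le_sqrt
  exact Finset.single_le_sum (fun j _ => sq_nonneg ‖s j‖) (Finset.mem_univ i)

lemma norm_le_sum_abs {d : ℕ} (s : EuclideanSpace ℝ (Fin d)) :
    ‖s‖ ≤ ∑ i, |s i| := by
  rw [EuclideanSpace.norm_eq]
  calc Real.sqrt (∑ i, ‖s i‖ ^ 2) ≤ Real.sqrt ((∑ i, |s i|) ^ 2) := by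
        apply Real.sqrt_le_sqrt
        simp only [Real.norm_eq_abs]
        exact Finset.sum_sq_le_sq_sum_of_nonneg fun i _ => abs_nonneg _
    _ = ∑ i, |s i| := Real.sqrt_sq (Finset.sum_nonneg fun i _ => abs_nonneg _)

theorem stmt3 (d : ℕ) (hd : 1 ≤ d)
    (N : Seminorm ℝ (EuclideanSpace ℝ (Fin d)))
    (C : Set (EuclideanSpace ℝ (Fin d)))
    (hC : C = {s : EuclideanSpace ℝ (Fin d) | N s = 1})
    (γ : Measure (EuclideanSpace ℝ (Fin d))) (hγC : γ Cᶜ = 0)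
    (hint : ∀ u : EuclideanSpace ℝ (Fin d),
      ∫⁻ s in C, ENNReal.ofReal (|⟪u, s⟫| * |(Real.log |⟪u, s⟫|)|) ∂γ < ⊤) :
    ∫⁻ s in C, ENNReal.ofReal (‖s‖ * |(Real.log ‖s‖)|) ∂γ < ⊤ := by
  have hlog2 : (0:ℝ) < Real.log 2 := Real.log_pos one_lt_two
  have hd1 : (1:ℝ) ≤ d := by exact_mod_cast hd
  have hlogd : 0 ≤ Real.log d := Real.log_nonneg hd1
  set K : ℝ := d + Real.log d / Real.log 2 with hK
  have hK0 : 0 ≤ K := by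
    have : 0 ≤ Real.log d / Real.log 2 := div_nonneg hlogd hlog2.le
    rw [hK]; linarith
  -- the integrand for a direction u
  set F : EuclideanSpace ℝ (Fin d) → EuclideanSpace ℝ (Fin d) → ENNReal :=
    fun u s => ENNReal.ofReal (|⟪u, s⟫| * |(Real.log |⟪u, s⟫|)|) with hF
  have hmeas : ∀ u, Measurable (F u) := by
    intro u
    have hc : Continuous (fun s : EuclideanSpace ℝ (Fin d) => |⟪u, s⟫|) :=
      (continuous_const.inner continuous_id).abs
    exact ENNReal.measurable_ofReal.comp
      (hc.measurable.mul (continuous_abs.measurable.comp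
        (Real.measurable_log.comp hc.measurable)))
  -- pointwise real inequality
  have master : ∀ s : EuclideanSpace ℝ (Fin d),
      ‖s‖ * |(Real.log ‖s‖)| ≤ K * ∑ i,
        ((|⟪EuclideanSpace.single i (1:ℝ), s⟫| *
            |(Real.log |⟪EuclideanSpace.single i (1:ℝ), s⟫|)|) +
         (|⟪EuclideanSpace.single i (2:ℝ), s⟫| *
            |(Real.log |⟪EuclideanSpace.single i (2:ℝ), s⟫|)|)) := by
    intro s
    have hsimp1 : ∀ i : Fin d, |⟪EuclideanSpace.single i (1:ℝ), s⟫| = |s i| := by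
      intro i; simp [EuclideanSpace.inner_single_left]
    have hsimp2 : ∀ i : Fin d, |⟪EuclideanSpace.single i (2:ℝ), s⟫| = 2 * |s i| := by
      intro i; simp [EuclideanSpace.inner_single_left, abs_mul]
    simp only [hsimp1, hsimp2]
    show phi ‖s‖ ≤ K * ∑ i, (phi (|s i|) + phi (2 * |s i|))
    have l2 : phi ‖s‖ ≤ d * ∑ i, phi (|s i|) + Real.log d * ∑ i, |s i| :=
      L2 hd (fun i => |s i|) ‖s‖ (fun i => abs_nonneg _)
        (fun i => coord_le_norm s i) (norm_le_sum_abs s)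
    set S : ℝ := ∑ i, (phi (|s i|) + phi (2 * |s i|)) with hS
    have hS0 : 0 ≤ S := Finset.sum_nonneg fun i _ =>
      add_nonneg (phi_nonneg (abs_nonneg _)) (phi_nonneg (by positivity))
    have hsum1 : ∑ i, |s i| ≤ S / Real.log 2 := by
      rw [hS, Finset.sum_div]
      refine Finset.sum_le_sum fun i _ => ?_
      rw [le_div_iff₀ hlog2]
      exact L1 (abs_nonneg _)
    have hphisum : ∑ i, phi (|s i|) ≤ S := by
      rw [hS]
      exact Finset.sum_le_sum fun i _ =>
        le_add_of_nonneg_right (phi_nonneg (by positivity))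
    have e1 : (d:ℝ) * (∑ i, phi (|s i|)) ≤ d * S :=
      mul_le_mul_of_nonneg_left hphisum (by positivity)
    have e2 : Real.log d * (∑ i, |s i|) ≤ Real.log d * (S / Real.log 2) :=
      mul_le_mul_of_nonneg_left hsum1 hlogd
    have e3 : (d:ℝ) * S + Real.log d * (S / Real.log 2) = K * S := by
      rw [hK]; ring
    calc phi ‖s‖ ≤ ↑d * ∑ i, phi (|s i|) + Real.log ↑d * ∑ i, |s i| := l2
      _ ≤ ↑d * S + Real.log ↑d * (S / Real.log 2) := add_le_add e1 e2
      _ = K * S := e3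
  -- integral estimate
  have step : ∫⁻ s in C, ENNReal.ofReal (‖s‖ * |(Real.log ‖s‖)|) ∂γ ≤
      ENNReal.ofReal K * ∫⁻ s in C,
        (∑ i, (F (EuclideanSpace.single i (1:ℝ)) s +
               F (EuclideanSpace.single i (2:ℝ)) s)) ∂γ := by
    rw [← lintegral_const_mul' _ _ ENNReal.ofReal_ne_top]
    refine lintegral_mono fun s => ?_
    calc ENNReal.ofReal (‖s‖ * |(Real.log ‖s‖)|)
        ≤ ENNReal.ofReal (K * ∑ i,
          ((|⟪EuclideanSpace.single i (1:ℝ), s⟫| *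
              |(Real.log |⟪EuclideanSpace.single i (1:ℝ), s⟫|)|) +
           (|⟪EuclideanSpace.single i (2:ℝ), s⟫| *
              |(Real.log |⟪EuclideanSpace.single i (2:ℝ), s⟫|)|))) :=
          ENNReal.ofReal_le_ofReal (master s)
      _ = ENNReal.ofReal K * ENNReal.ofReal (∑ i,
          ((|⟪EuclideanSpace.single i (1:ℝ), s⟫| *
              |(Real.log |⟪EuclideanSpace.single i (1:ℝ), s⟫|)|) +
           (|⟪EuclideanSpace.single i (2:ℝ), s⟫| *
              |(Real.log |⟪EuclideanSpace.single i (2:ℝ), s⟫|)|))) :=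
          ENNReal.ofReal_mul hK0
      _ = ENNReal.ofReal K * ∑ i, (F (EuclideanSpace.single i (1:ℝ)) s +
               F (EuclideanSpace.single i (2:ℝ)) s) := by
          rw [ENNReal.ofReal_sum_of_nonneg (fun i _ => by positivity)]
          congr 1
          refine Finset.sum_congr rfl fun i _ => ?_
          rw [ENNReal.ofReal_add (by positivity) (by positivity)]
  have hfin : ENNReal.ofReal K * ∫⁻ s in C,
        (∑ i, (F (EuclideanSpace.single i (1:ℝ)) s +
               F (EuclideanSpace.single i (2:ℝ)) s)) ∂γ < ⊤ := by
    have heq : ∫⁻ s in C, (∑ i, (F (EuclideanSpace.single i (1:ℝ)) s +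
               F (EuclideanSpace.single i (2:ℝ)) s)) ∂γ =
        ∑ i, ∫⁻ s in C, (F (EuclideanSpace.single i (1:ℝ)) s +
               F (EuclideanSpace.single i (2:ℝ)) s) ∂γ :=
      lintegral_finset_sum _ fun i _ => (hmeas _).add (hmeas _)
    rw [heq]
    refine ENNReal.mul_lt_top ENNReal.ofReal_lt_top (ENNReal.sum_lt_top.mpr fun i _ => ?_)
    rw [lintegral_add_left (hmeas _)]
    exact ENNReal.add_lt_top.mpr ⟨hint _, hint _⟩
  exact lt_of_le_of_lt step hfin
end

section
/- Let d ≥ 1, N a seminorm on ℝ^d, C = {s ∈ ℝ^d : N(s) = 1}, and let γ be a Borel measure on ℝ^d concentrated on C such that for every u ∈ ℝ^d one has ∫_C |⟨u,s⟩| · |log|⟨u,s⟩|| dγ(s) < ∞. Then for every M > 0, γ({s ∈ C : ‖s‖₂ ≤ M}) < ∞. -/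
/-!
The weight `t ↦ |t| |log |t||` vanishes only at `t ∈ {0, 1, -1}`, so testing the integrability
hypothesis against the vectors `bᵢ` and `2 bᵢ` of an orthonormal basis gives a continuous function
`G s = ∑ |⟪u, s⟫| |log |⟪u, s⟫||` with finite integral over `C` that is positive away from `0`.
Since `N` is continuous (a convex function on a finite-dimensional space) and `N 0 = 0`, the set
`{s ∈ C | ‖s‖ ≤ M}` is compact and avoids `0`, so `G` has a positive lower bound on it, and its
`γ`-measure is at most `∫_C G dγ` divided by that bound.
-/

open MeasureTheory
open scoped RealInnerProductSpace

noncomputable def absMulAbsLog (t : ℝ) : ℝ := |t| * |(Real.log |t|)|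

@[fun_prop]
theorem continuous_absMulAbsLog : Continuous absMulAbsLog := by
  have h : absMulAbsLog = fun t => |(|t| * Real.log |t|)| :=
    funext fun t => by rw [absMulAbsLog, abs_mul, abs_abs]
  rw [h]
  exact (Real.continuous_mul_log.comp continuous_abs).abs

theorem absMulAbsLog_nonneg (t : ℝ) : 0 ≤ absMulAbsLog t := by
  unfold absMulAbsLog
  positivity

theorem absMulAbsLog_pos {t : ℝ} (h0 : t ≠ 0) (h1 : |t| ≠ 1) : 0 < absMulAbsLog t :=
  mul_pos (abs_pos.2 h0) (abs_pos.2 (Real.log_ne_zero_of_pos_of_ne_one (abs_pos.2 h0) h1))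

theorem measure_lt_top_of_isCompact_of_setLIntegral_lt_top {X : Type*} [TopologicalSpace X]
    [MeasurableSpace X] [OpensMeasurableSpace X] {μ : Measure X} {K : Set X} (hK : IsCompact K)
    {f : X → ℝ} (hf : Continuous f) (hpos : ∀ x ∈ K, 0 < f x)
    (hint : ∫⁻ x in K, ENNReal.ofReal (f x) ∂μ < ⊤) : μ K < ⊤ := by
  rcases K.eq_empty_or_nonempty with rfl | hne
  · simp
  obtain ⟨x₀, hx₀, hmin⟩ := hK.exists_isMinOn hne hf.continuousOn
  have hle : ENNReal.ofReal (f x₀) * μ K ≤ ∫⁻ x in K, ENNReal.ofReal (f x) ∂μ := by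
    rw [← setLIntegral_const]
    exact setLIntegral_mono hf.measurable.ennreal_ofReal
      fun x hx => ENNReal.ofReal_le_ofReal (hmin hx)
  exact ENNReal.lt_top_of_mul_ne_top_right (hle.trans_lt hint).ne
    (ENNReal.ofReal_pos.2 (hpos x₀ hx₀)).ne'

theorem setLIntegral_ofReal_sum_lt_top {X ι : Type*} [MeasurableSpace X] [Fintype ι]
    {μ : Measure X} {s : Set X} {f : ι → X → ℝ} (hf : ∀ i, Measurable (f i))
    (hf₀ : ∀ i x, 0 ≤ f i x) (hint : ∀ i, ∫⁻ x in s, ENNReal.ofReal (f i x) ∂μ < ⊤) :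
    ∫⁻ x in s, ENNReal.ofReal (∑ i, f i x) ∂μ < ⊤ := by
  simp_rw [ENNReal.ofReal_sum_of_nonneg fun i _ => hf₀ i _]
  rw [lintegral_finsetSum _ fun i _ => (hf i).ennreal_ofReal]
  exact ENNReal.sum_lt_top.2 fun i _ => hint i

section DoubledBasis

variable (E : Type*) [NormedAddCommGroup E] [InnerProductSpace ℝ E] [FiniteDimensional ℝ E]

noncomputable def doubledBasis : Fin (Module.finrank ℝ E) ⊕ Fin (Module.finrank ℝ E) → E :=
  Sum.elim (stdOrthonormalBasis ℝ E) fun i => (2 : ℝ) • stdOrthonormalBasis ℝ E i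

variable {E}

theorem exists_absMulAbsLog_inner_doubledBasis_pos {s : E} (hs : s ≠ 0) :
    ∃ j, 0 < absMulAbsLog ⟪doubledBasis E j, s⟫ := by
  obtain ⟨i, hi⟩ : ∃ i, ⟪stdOrthonormalBasis ℝ E i, s⟫ ≠ 0 := by
    by_contra! h
    refine hs ((stdOrthonormalBasis ℝ E).repr.map_eq_zero_iff.1 ?_)
    ext i
    simpa [OrthonormalBasis.repr_apply_apply] using h i
  by_cases h1 : |⟪stdOrthonormalBasis ℝ E i, s⟫| = 1
  · refine ⟨.inr i, ?_⟩
    rw [doubledBasis, Sum.elim_inr, real_inner_smul_left]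
    exact absMulAbsLog_pos (mul_ne_zero two_ne_zero hi) (by rw [abs_mul, h1]; norm_num)
  · exact ⟨.inl i, absMulAbsLog_pos hi h1⟩

end DoubledBasis

theorem stmt4_general (d : ℕ)
    (N : Seminorm ℝ (EuclideanSpace ℝ (Fin d)))
    (C : Set (EuclideanSpace ℝ (Fin d)))
    (hC : C = {s : EuclideanSpace ℝ (Fin d) | N s = 1})
    (γ : Measure (EuclideanSpace ℝ (Fin d)))
    (hint : ∀ u : EuclideanSpace ℝ (Fin d),
      ∫⁻ s in C, ENNReal.ofReal (|⟪u, s⟫| * |(Real.log |⟪u, s⟫|)|) ∂γ < ⊤) :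
    ∀ M : ℝ, 0 < M → γ {s | s ∈ C ∧ ‖s‖ ≤ M} < ⊤ := by
  intro M _
  set G : EuclideanSpace ℝ (Fin d) → ℝ := fun s => ∑ j, absMulAbsLog ⟪doubledBasis _ j, s⟫
  have hG : Continuous G := by
    unfold G
    fun_prop
  have hN : Continuous N := continuousOn_univ.1 (N.convexOn.continuousOn isOpen_univ)
  have hK : IsCompact {s | s ∈ C ∧ ‖s‖ ≤ M} := by
    subst hC
    exact (isCompact_closedBall 0 M).of_isClosed_subset
      ((isClosed_eq hN continuous_const).inter (isClosed_le continuous_norm continuous_const))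
      fun s hs => mem_closedBall_zero_iff.2 hs.2
  refine measure_lt_top_of_isCompact_of_setLIntegral_lt_top hK hG ?_ ?_
  · rintro s ⟨hsC, -⟩
    have hs : s ≠ 0 := by
      rintro rfl
      simp [hC] at hsC
    obtain ⟨j, hj⟩ := exists_absMulAbsLog_inner_doubledBasis_pos hs
    exact Finset.sum_pos' (fun j _ => absMulAbsLog_nonneg _) ⟨j, Finset.mem_univ j, hj⟩
  · exact (lintegral_mono_set fun s hs => hs.1).trans_lt
      (setLIntegral_ofReal_sum_lt_top (fun j => (by fun_prop : Continuous _).measurable)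
        (fun j s => absMulAbsLog_nonneg _) fun j => hint (doubledBasis _ j))

theorem stmt4 (d : ℕ) (hd : 1 ≤ d)
    (N : Seminorm ℝ (EuclideanSpace ℝ (Fin d)))
    (C : Set (EuclideanSpace ℝ (Fin d)))
    (hC : C = {s : EuclideanSpace ℝ (Fin d) | N s = 1})
    (γ : Measure (EuclideanSpace ℝ (Fin d))) (hγC : γ Cᶜ = 0)
    (hint : ∀ u : EuclideanSpace ℝ (Fin d),
      ∫⁻ s in C, ENNReal.ofReal (|⟪u, s⟫| * |(Real.log |⟪u, s⟫|)|) ∂γ < ⊤) :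
    ∀ M : ℝ, 0 < M → γ {s | s ∈ C ∧ ‖s‖ ≤ M} < ⊤ :=
  stmt4_general d N C hC γ hint
end

section
/- Let m ≥ 0 and h ≥ 1 be integers, d : ℤ → ℝ a sequence, and N a seminorm on ℝ^{m+h+1} (coordinates indexed by i ∈ {−m,…,0,1,…,h}) satisfying condition (S): N(x) = 0 if and only if x_{−m} = ⋯ = x_0 = 0. For k ∈ ℤ define D_k ∈ ℝ^{m+h+1} by (D_k)_i = d_{k−i} for i ∈ {−m,…,h}, i.e. D_k = (d_{k+m},…,d_k,d_{k−1},…,d_{k−h}). Then the following are equivalent: (i) for every k ∈ ℤ, N(D_k) = 0 implies D_k = 0; (ii) for every k ∈ ℤ, if d_{k+m} = ⋯ = d_{k+1} = d_k = 0 then d_ℓ = 0 for every ℓ ≤ k−1. -/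
/-!
If `d` vanishes on the window `d_k, …, d_{k+m}`, condition (S) gives `N(D_k) = 0`; under (i)
the whole of `D_k` then vanishes, and since `h ≥ 1` its coordinate `m + 1`, namely `d_{k-1}`,
vanishes too. So the window slides down one step at a time, which is (ii). Conversely,
`N(D_k) = 0` means exactly that the window at `k` vanishes, and (ii) kills the remaining
coordinates `d_{k-1}, …, d_{k-h}` of `D_k`.
-/

theorem Int.eq_zero_of_le_of_window_eq_zero {M : Type*} [Zero M] {d : ℤ → M} {m : ℕ}
    (step : ∀ k : ℤ, (∀ i : ℤ, 0 ≤ i → i ≤ (m : ℤ) → d (k + i) = 0) → d (k - 1) = 0)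
    {k : ℤ} (hk : ∀ i : ℤ, 0 ≤ i → i ≤ (m : ℤ) → d (k + i) = 0) :
    ∀ l ≤ k, d l = 0 := by
  have window : ∀ j ≤ k, ∀ i : ℤ, 0 ≤ i → i ≤ (m : ℤ) → d (j + i) = 0 := by
    refine Int.leInductionDown (motive := fun j _ => ∀ i : ℤ, 0 ≤ i → i ≤ (m : ℤ) → d (j + i) = 0)
      hk fun j _ hj i hi0 him => ?_
    rcases hi0.eq_or_lt with rfl | hi
    · simpa using step j hj
    · rw [show j - 1 + i = j + (i - 1) by ring]
      exact hj (i - 1) (by omega) (by omega)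
  intro l hl
  simpa using window l hl 0 le_rfl (Int.natCast_nonneg m)

section MovingWindow

variable {m h : ℕ} {d : ℤ → ℝ} {D : ℤ → EuclideanSpace ℝ (Fin (m + h + 1))}

theorem head_eq_zero_iff_window_eq_zero
    (hD : ∀ (k : ℤ) (i : Fin (m + h + 1)), D k i = d (k + (m : ℤ) - ((i : ℕ) : ℤ))) (k : ℤ) :
    (∀ i : Fin (m + h + 1), (i : ℕ) ≤ m → D k i = 0) ↔
      ∀ j : ℤ, 0 ≤ j → j ≤ (m : ℤ) → d (k + j) = 0 := by
  constructor
  · intro H j hj0 hjm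
    have := H ⟨m - j.toNat, by omega⟩ (by simp)
    rwa [hD, show k + (m : ℤ) - ((m - j.toNat : ℕ) : ℤ) = k + j by omega] at this
  · intro H i hi
    rw [hD, show k + (m : ℤ) - ((i : ℕ) : ℤ) = k + (m - (i : ℕ) : ℕ) by omega]
    exact H _ (Int.natCast_nonneg _) (by omega)

theorem eq_zero_of_window_eq_zero_of_eq_zero_below
    (hD : ∀ (k : ℤ) (i : Fin (m + h + 1)), D k i = d (k + (m : ℤ) - ((i : ℕ) : ℤ))) {k : ℤ}
    (hwin : ∀ j : ℤ, 0 ≤ j → j ≤ (m : ℤ) → d (k + j) = 0)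
    (hbelow : ∀ l : ℤ, l ≤ k - 1 → d l = 0) :
    D k = 0 := by
  ext i
  rcases le_or_gt (i : ℕ) m with hle | hlt
  · exact (head_eq_zero_iff_window_eq_zero hD k).2 hwin i hle
  · rw [hD]
    exact hbelow _ (by omega)

theorem pred_eq_zero_of_eq_zero (hh : 1 ≤ h)
    (hD : ∀ (k : ℤ) (i : Fin (m + h + 1)), D k i = d (k + (m : ℤ) - ((i : ℕ) : ℤ))) {k : ℤ}
    (hk : D k = 0) :
    d (k - 1) = 0 := by
  have := hD k ⟨m + 1, by omega⟩
  rw [hk, show k + (m : ℤ) - ((m + 1 : ℕ) : ℤ) = k - 1 by omega] at this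
  exact this.symm

end MovingWindow

theorem stmt7 (m h : ℕ) (hh : 1 ≤ h) (d : ℤ → ℝ)
    (N : Seminorm ℝ (EuclideanSpace ℝ (Fin (m + h + 1))))
    (hN : ∀ x : EuclideanSpace ℝ (Fin (m + h + 1)),
      N x = 0 ↔ ∀ i : Fin (m + h + 1), (i : ℕ) ≤ m → x i = 0)
    (D : ℤ → EuclideanSpace ℝ (Fin (m + h + 1)))
    (hD : ∀ (k : ℤ) (i : Fin (m + h + 1)), D k i = d (k + (m : ℤ) - ((i : ℕ) : ℤ))) :
    (∀ k : ℤ, N (D k) = 0 → D k = 0) ↔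
    (∀ k : ℤ, (∀ i : ℤ, 0 ≤ i → i ≤ (m : ℤ) → d (k + i) = 0) →
        ∀ l : ℤ, l ≤ k - 1 → d l = 0) := by
  have hNwin : ∀ k, N (D k) = 0 ↔ ∀ j : ℤ, 0 ≤ j → j ≤ (m : ℤ) → d (k + j) = 0 := fun k =>
    (hN _).trans (head_eq_zero_iff_window_eq_zero hD k)
  constructor
  · intro H k hk l hl
    exact Int.eq_zero_of_le_of_window_eq_zero
      (fun j hj => pred_eq_zero_of_eq_zero hh hD (H j ((hNwin j).2 hj))) hk l (by omega)
  · intro H k hNz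
    have hwin := (hNwin k).1 hNz
    exact eq_zero_of_window_eq_zero_of_eq_zero_below hD hwin (H k hwin)
end

section
/- Let d : ℤ → ℝ be a sequence, M = {m ∈ ℕ, m ≥ 1 : ∃ k ∈ ℤ, d_{k+m} = ⋯ = d_{k+1} = 0 and d_k ≠ 0}, and suppose M is bounded above; set m₀ = sup M if M ≠ ∅ and m₀ = 0 if M = ∅. Then for every integer m ≥ 0, the property [for every k ∈ ℤ: d_{k+m} = ⋯ = d_{k+1} = d_k = 0 implies d_ℓ = 0 for all ℓ ≤ k−1] holds if and only if m ≥ m₀. -/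
theorem stmt9 (d : ℤ → ℝ)
    (M : Set ℕ)
    (hM : M = {m : ℕ | 1 ≤ m ∧ ∃ k : ℤ,
        (∀ i : ℤ, 1 ≤ i → i ≤ (m : ℤ) → d (k + i) = 0) ∧ d k ≠ 0})
    (hbdd : BddAbove M)
    (m₀ : ℕ)
    (hm₀ : M.Nonempty → m₀ = sSup M)
    (hm₀' : M = ∅ → m₀ = 0) :
    ∀ m : ℕ, ((∀ k : ℤ, (∀ i : ℤ, 0 ≤ i → i ≤ (m : ℤ) → d (k + i) = 0) →
        ∀ l : ℤ, l ≤ k - 1 → d l = 0) ↔ m₀ ≤ m) := by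
  intro m
  constructor
  · intro hP
    rcases Set.eq_empty_or_nonempty M with hemp | hne
    · simp [hm₀' hemp]
    · have hsup := hm₀ hne
      have hmem : m₀ ∈ M := by rw [hsup]; exact Nat.sSup_mem hne hbdd
      rw [hM] at hmem
      obtain ⟨h1, k, hz, hk⟩ := hmem
      by_contra hlt
      push_neg at hlt
      have hm1 : (m : ℤ) + 1 ≤ (m₀ : ℤ) := by exact_mod_cast hlt
      have : d k = 0 := by
        refine hP (k + 1) (fun i hi0 hi1 => ?_) k (by omega)
        have he : k + 1 + i = k + (i + 1) := by ring
        rw [he]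
        exact hz (i + 1) (by omega) (by omega)
      exact hk this
  · intro hle k hz l hl
    by_contra hdl
    obtain ⟨l₀, ⟨hl₀k, hdl₀⟩, hmax⟩ :=
      Int.exists_greatest_of_bdd (P := fun z => z ≤ k - 1 ∧ d z ≠ 0)
        ⟨k - 1, fun z hz' => hz'.1⟩ ⟨l, hl, hdl⟩
    set m' : ℕ := (k + m - l₀).toNat with hm'
    have hl₀ : l₀ ≤ k - 1 := hl₀k
    have hm'val : (m' : ℤ) = k + m - l₀ := by
      rw [hm', Int.toNat_of_nonneg (by omega)]
    have hzeros : ∀ j : ℤ, l₀ < j → j ≤ k + m → d j = 0 := by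
      intro j hj1 hj2
      rcases le_or_gt j (k - 1) with hcase | hcase
      · by_contra hne'
        have := hmax j ⟨hcase, hne'⟩
        omega
      · have he : j = k + (j - k) := by ring
        rw [he]
        exact hz (j - k) (by omega) (by omega)
    have hm'M : m' ∈ M := by
      rw [hM]
      refine ⟨by omega, l₀, fun i hi1 hi2 => hzeros (l₀ + i) (by omega) (by omega), hdl₀⟩
    have hne : M.Nonempty := ⟨m', hm'M⟩
    have hsup := hm₀ hne
    have : m' ≤ m₀ := hsup ▸ le_csSup hbdd hm'M
    omega
end

section
/- Let 0 < α < 2, J ≥ 1, and for j = 1,…,J let ρ_j ∈ (−1,1)∖{0}, β_j ∈ [−1,1], π_j > 0. Let m ≥ 0, h ≥ 1 be integers and N a seminorm on ℝ^{m+h+1} (coordinates indexed by i ∈ {−m,…,h}) satisfying condition (S): N(x) = 0 ⟺ x_{−m} = ⋯ = x_0 = 0. For j ∈ {1,…,J} and k ≥ −m define d_{j,k} ∈ ℝ^{m+h+1} by (d_{j,k})_i = ρ_j^{k−i} if k ≥ i and 0 otherwise, and set w_{j,θ} = (1+θβ_j)/2 for θ ∈ {−1,+1}; note d_{j,−m}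 = e := (1,0,…,0) for every j, and N(d_{j,k}) > 0 for all k ≥ −m. Then the Borel measure on ℝ^{m+h+1} given by Γ = Σ_{j=1}^J Σ_{θ∈{−1,+1}} Σ_{k=−m}^{∞} w_{j,θ} π_j^α N(d_{j,k})^α δ_{θ N(d_{j,k})^{-1} d_{j,k}} is equal to Σ_{θ∈{−1,+1}} [ (Σ_{j=1}^J π_j^α w_{j,θ}) N(e)^α δ_{θ N(e)^{-1} e} + Σ_{j=1}^J π_j^α ( w_{j,θ} Σ_{k=−m+1}^{h−1} N(d_{j,k})^α δ_{θ N(d_{j,k})^{-1} d_{j,k}} + ((1+θβ̄_j)/2) (1−|ρ_j|^α)^{-1} N(d_{j,h})^α δ_{θ N(d_{j,h})^{-1} d_{j,h}} ) ], where β̄_j = β_j (1−|ρ_j|^α)/(1−ρ_j^{⟨α⟩}) and ρ^{⟨α⟩} := sign(ρ)|ρ|^α. -/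
/-!
For `k = h + l` with `l ≥ 0` every coordinate of `d_{j,k}` is `ρ_j ^ l` times the one of
`d_{j,h}`, so `N(d_{j,k})^α = |ρ_j|^{α l} N(d_{j,h})^α` and the normalised atom
`θ N(d_{j,k})⁻¹ d_{j,k}` equals `θ sign(ρ_j)^l N(d_{j,h})⁻¹ d_{j,h}`. Reindexing `θ` over `{-1, 1}`
moves the sign into the weight, and the tail `k ≥ h` becomes a single pair of atoms whose mass is
the sum of two geometric series, with ratios `|ρ_j|^α` and `sign(ρ_j) |ρ_j|^α`. The index
`k = -m` gives the common atom `e`, and `-m < k < h` is kept as it is.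
-/

open MeasureTheory

open scoped ENNReal

namespace MeasureTheory.Measure

variable {α ι : Type*} [MeasurableSpace α]

lemma sum_finsetSum {κ : Type*} (s : Finset κ) (μ : ι → κ → Measure α) :
    sum (fun n => ∑ k ∈ s, μ n k) = ∑ k ∈ s, sum (fun n => μ n k) := by
  ext t ht
  simp only [sum_apply _ ht, finsetSum_apply]
  exact Summable.tsum_finsetSum fun _ _ => ENNReal.summable

lemma sum_smul_const (c : ι → ℝ≥0∞) (μ : Measure α) :
    sum (fun n => c n • μ) = (∑' n, c n) • μ := by
  ext t ht
  simp only [sum_apply _ ht, smul_apply, smul_eq_mul, ENNReal.tsum_mul_right]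

lemma sum_nat_sub_eq_sum_Ico_add_sum (F : ℤ → Measure α) (m h : ℕ) :
    sum (fun n : ℕ => F (n - m))
      = ∑ k ∈ Finset.Ico (-(m : ℤ)) h, F k + sum (fun l : ℕ => F (h + l)) := by
  ext t ht
  simp only [add_apply, sum_apply _ ht, finsetSum_apply]
  rw [← ENNReal.summable.sum_add_tsum_nat_add' (k := m + h)]
  congr 1
  · refine Finset.sum_nbij' (fun n => (n : ℤ) - m) (fun k => (k + m).toNat) ?_ ?_ ?_ ?_ ?_
    · intro n hn
      simp only [Finset.mem_range] at hn
      simp only [Finset.mem_Ico]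
      omega
    · intro k hk
      simp only [Finset.mem_Ico] at hk
      simp only [Finset.mem_range]
      omega
    · intro n _
      simp
    · intro k hk
      simp only [Finset.mem_Ico] at hk
      omega
    · intro n _
      rfl
  · exact tsum_congr fun l => by congr 2; push_cast; ring

end MeasureTheory.Measure

lemma Real.div_abs_eq_sign {r : ℝ} (hr : r ≠ 0) : r / |r| = Real.sign r := by
  rcases hr.lt_or_gt with hr | hr
  · rw [abs_of_neg hr, Real.sign_of_neg hr, div_neg, div_self hr.ne]
  · rw [abs_of_pos hr, Real.sign_of_pos hr, div_self hr.ne']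

lemma sum_pm_one_mul_eq {M : Type*} [AddCommMonoid M] (f : ℝ → M) {u : ℝ} (hu : |u| = 1) :
    ∑ θ ∈ ({-1, 1} : Finset ℝ), f (θ * u) = ∑ θ ∈ ({-1, 1} : Finset ℝ), f θ := by
  rcases (abs_eq zero_le_one).mp hu with rfl | rfl
  · simp
  · simp [Finset.sum_pair (by norm_num : (-1 : ℝ) ≠ 1), add_comm]

lemma abs_eq_one_of_mem_pm_one {θ : ℝ} (hθ : θ ∈ ({-1, 1} : Finset ℝ)) : |θ| = 1 := by
  simp only [Finset.mem_insert, Finset.mem_singleton] at hθ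
  rcases hθ with rfl | rfl <;> simp

lemma half_one_add_mul_nonneg {θ b : ℝ} (hθ : |θ| ≤ 1) (hb : |b| ≤ 1) : 0 ≤ (1 + θ * b) / 2 := by
  have : |θ * b| ≤ 1 := by rw [abs_mul]; exact mul_le_one₀ hθ (abs_nonneg b) hb
  linarith [neg_abs_le (θ * b)]

lemma hasSum_half_one_add_mul_pow_mul_geometric {A s : ℝ} (hA : |A| < 1) (hsA : |s * A| < 1)
    (θ b : ℝ) :
    HasSum (fun l : ℕ => (1 + θ * s ^ l * b) / 2 * A ^ l)
      ((1 + θ * (b * (1 - A) / (1 - s * A))) / 2 * (1 - A)⁻¹) := by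
  have h1 : 1 - A ≠ 0 := sub_ne_zero.mpr (lt_of_abs_lt hA).ne'
  have h2 : 1 - s * A ≠ 0 := sub_ne_zero.mpr (lt_of_abs_lt hsA).ne'
  have hsum := ((hasSum_geometric_of_abs_lt_one hA).mul_right (1 / 2)).add
    ((hasSum_geometric_of_abs_lt_one hsA).mul_right (θ * b / 2))
  rw [show (1 + θ * (b * (1 - A) / (1 - s * A))) / 2 * (1 - A)⁻¹
      = (1 - A)⁻¹ * (1 / 2) + (1 - s * A)⁻¹ * (θ * b / 2) by field_simp]
  exact hsum.congr_fun fun l => by rw [mul_pow]; ring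

lemma Finset.sum_sum_ofReal_smul_comm {ι κ M : Type*} [AddCommMonoid M] [Module ℝ≥0∞ M]
    (s : Finset ι) (t : Finset κ) (a : ι → κ → ℝ) (ha : ∀ i ∈ s, ∀ k ∈ t, 0 ≤ a i k)
    (x : κ → M) :
    ∑ i ∈ s, ∑ k ∈ t, ENNReal.ofReal (a i k) • x k
      = ∑ k ∈ t, ENNReal.ofReal (∑ i ∈ s, a i k) • x k := by
  rw [Finset.sum_comm]
  refine Finset.sum_congr rfl fun k hk => ?_
  rw [ENNReal.ofReal_sum_of_nonneg fun i hi => ha i hi k hk, Finset.sum_smul]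

section

variable {E : Type*} [AddCommGroup E] [Module ℝ E]

lemma Seminorm.mul_inv_smul_smul (N : Seminorm ℝ E) (θ : ℝ) {c : ℝ} (hc : c ≠ 0) (v : E) :
    (θ * (N (c • v))⁻¹) • (c • v) = (θ * (c / |c|) * (N v)⁻¹) • v := by
  rw [map_smul_eq_mul, Real.norm_eq_abs, smul_smul, mul_inv]
  congr 1
  field_simp

variable [MeasurableSpace E]

theorem Seminorm.sum_geometric_atoms_eq (N : Seminorm ℝ E) (v : E) {α r b c : ℝ} (hα : 0 < α)
    (hr0 : r ≠ 0) (hr1 : |r| < 1) (hb : |b| ≤ 1) (hc : 0 ≤ c) :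
    Measure.sum (fun l : ℕ => ∑ θ ∈ ({-1, 1} : Finset ℝ),
        ENNReal.ofReal ((1 + θ * b) / 2 * c * N (r ^ l • v) ^ α)
          • Measure.dirac ((θ * (N (r ^ l • v))⁻¹) • (r ^ l • v)))
      = ∑ θ ∈ ({-1, 1} : Finset ℝ),
        ENNReal.ofReal (c * ((1 + θ * (b * (1 - |r| ^ α) / (1 - Real.sign r * |r| ^ α))) / 2)
            * (1 - |r| ^ α)⁻¹ * N v ^ α)
          • Measure.dirac ((θ * (N v)⁻¹) • v) := by
  set A := |r| ^ α
  set s := r / |r| with hs_def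
  have hs : |s| = 1 := by rw [abs_div, abs_abs, div_self (abs_ne_zero.mpr hr0)]
  have hsl (l : ℕ) : |s ^ l| = 1 := by rw [abs_pow, hs, one_pow]
  have hA : |A| < 1 := by
    rw [abs_of_nonneg (by positivity)]
    exact Real.rpow_lt_one (abs_nonneg r) hr1 hα
  have hsA : |s * A| < 1 := by rwa [abs_mul, hs, one_mul]
  have hterm (l : ℕ) : ∑ θ ∈ ({-1, 1} : Finset ℝ),
        ENNReal.ofReal ((1 + θ * b) / 2 * c * N (r ^ l • v) ^ α)
          • Measure.dirac ((θ * (N (r ^ l • v))⁻¹) • (r ^ l • v))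
      = ∑ θ ∈ ({-1, 1} : Finset ℝ),
        ENNReal.ofReal ((1 + θ * s ^ l * b) / 2 * A ^ l * (c * N v ^ α))
          • Measure.dirac ((θ * (N v)⁻¹) • v) := by
    rw [← sum_pm_one_mul_eq _ (hsl l)]
    refine Finset.sum_congr rfl fun θ _ => ?_
    have hN : N (r ^ l • v) ^ α = A ^ l * N v ^ α := by
      rw [map_smul_eq_mul, norm_pow, Real.norm_eq_abs,
        Real.mul_rpow (by positivity) (apply_nonneg N v), Real.rpow_pow_comm (abs_nonneg r)]
    have hss : θ * s ^ l * s ^ l = θ := by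
      rw [mul_assoc, ← sq, ← sq_abs, hsl l, one_pow, mul_one]
    rw [hN, N.mul_inv_smul_smul _ (pow_ne_zero l hr0), abs_pow, ← div_pow, ← hs_def, hss]
    congr 2
    ring
  rw [Measure.sum_congr hterm, Measure.sum_finsetSum]
  refine Finset.sum_congr rfl fun θ hθ => ?_
  rw [Measure.sum_smul_const]
  congr 1
  have hsum := (hasSum_half_one_add_mul_pow_mul_geometric hA hsA θ b).mul_right (c * N v ^ α)
  have hnonneg (l : ℕ) : 0 ≤ (1 + θ * s ^ l * b) / 2 * A ^ l * (c * N v ^ α) := by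
    have hθl : |θ * s ^ l| ≤ 1 := by rw [abs_mul, abs_eq_one_of_mem_pm_one hθ, hsl l, one_mul]
    have := half_one_add_mul_nonneg hθl hb
    positivity
  rw [← ENNReal.ofReal_tsum_of_nonneg hnonneg hsum.summable, hsum.tsum_eq, hs_def,
    Real.div_abs_eq_sign hr0]
  congr 1
  ring

variable {J : Type*} [Fintype J] {α : ℝ} {β π : J → ℝ}

lemma sum_atoms_common_point (N : Seminorm ℝ E) (hβ : ∀ j, |β j| ≤ 1) (hπ : ∀ j, 0 < π j) (x : E) :
    ∑ j, ∑ θ ∈ ({-1, 1} : Finset ℝ),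
        ENNReal.ofReal ((1 + θ * β j) / 2 * π j ^ α * N x ^ α)
          • Measure.dirac ((θ * (N x)⁻¹) • x)
      = ∑ θ ∈ ({-1, 1} : Finset ℝ),
        ENNReal.ofReal ((∑ j, π j ^ α * ((1 + θ * β j) / 2)) * N x ^ α)
          • Measure.dirac ((θ * (N x)⁻¹) • x) := by
  rw [Finset.sum_sum_ofReal_smul_comm (M := Measure E)]
  · simp only [Finset.sum_mul, mul_comm (π _ ^ α)]
  · intro j _ θ hθ
    have := half_one_add_mul_nonneg (abs_eq_one_of_mem_pm_one hθ).le (hβ j)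
    have := hπ j
    positivity

lemma sum_atoms_factor_weight (N : Seminorm ℝ E) (hβ : ∀ j, |β j| ≤ 1) (hπ : ∀ j, 0 < π j)
    (I : Finset ℤ) (D : J → ℤ → E) :
    ∑ k ∈ I, ∑ j, ∑ θ ∈ ({-1, 1} : Finset ℝ),
        ENNReal.ofReal ((1 + θ * β j) / 2 * π j ^ α * N (D j k) ^ α)
          • Measure.dirac ((θ * (N (D j k))⁻¹) • D j k)
      = ∑ θ ∈ ({-1, 1} : Finset ℝ), ∑ j,
        ENNReal.ofReal (π j ^ α * ((1 + θ * β j) / 2))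
          • ∑ k ∈ I, ENNReal.ofReal (N (D j k) ^ α)
              • Measure.dirac ((θ * (N (D j k))⁻¹) • D j k) := by
  simp only [Finset.smul_sum, ← mul_smul]
  rw [Finset.sum_comm]
  conv_rhs => rw [Finset.sum_comm]
  refine Finset.sum_congr rfl fun j _ => ?_
  rw [Finset.sum_comm]
  refine Finset.sum_congr rfl fun θ hθ => Finset.sum_congr rfl fun k _ => ?_
  have := half_one_add_mul_nonneg (abs_eq_one_of_mem_pm_one hθ).le (hβ j)
  have := hπ j
  rw [← ENNReal.ofReal_mul (by positivity), mul_comm ((1 + θ * β j) / 2)]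

end

theorem stmt13_general (α : ℝ) (hα0 : 0 < α)
    (J : ℕ)
    (ρ β π : Fin J → ℝ)
    (hρ : ∀ j, ρ j ≠ 0 ∧ |ρ j| < 1)
    (hβ : ∀ j, |β j| ≤ 1) (hπ : ∀ j, 0 < π j)
    (m h : ℕ) (hh : 1 ≤ h)
    (N : Seminorm ℝ (EuclideanSpace ℝ (Fin (m + h + 1))))
    (D : Fin J → ℤ → EuclideanSpace ℝ (Fin (m + h + 1)))
    (hD : ∀ (j : Fin J) (k : ℤ) (i : Fin (m + h + 1)),
      D j k i = if ((i : ℕ) : ℤ) - (m : ℤ) ≤ k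
        then ρ j ^ (k + (m : ℤ) - ((i : ℕ) : ℤ)).toNat else 0)
    (e : EuclideanSpace ℝ (Fin (m + h + 1)))
    (he : ∀ i : Fin (m + h + 1), e i = if (i : ℕ) = 0 then 1 else 0) :
    Measure.sum (fun n : ℕ => ∑ j : Fin J, ∑ θ ∈ ({-1, 1} : Finset ℝ),
        ENNReal.ofReal ((1 + θ * β j) / 2 * π j ^ α * N (D j ((n : ℤ) - (m : ℤ))) ^ α)
          • Measure.dirac ((θ * (N (D j ((n : ℤ) - (m : ℤ))))⁻¹) • D j ((n : ℤ) - (m : ℤ))))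
    = ∑ θ ∈ ({-1, 1} : Finset ℝ),
        (ENNReal.ofReal ((∑ j : Fin J, π j ^ α * ((1 + θ * β j) / 2)) * N e ^ α)
            • Measure.dirac ((θ * (N e)⁻¹) • e)
          + ∑ j : Fin J,
            (ENNReal.ofReal (π j ^ α * ((1 + θ * β j) / 2))
                • ∑ k ∈ Finset.Icc (-(m : ℤ) + 1) ((h : ℤ) - 1),
                    ENNReal.ofReal (N (D j k) ^ α)
                      • Measure.dirac ((θ * (N (D j k))⁻¹) • D j k)
              + ENNReal.ofReal (π j ^ α
                    * ((1 + θ * (β j * (1 - |ρ j| ^ α) / (1 - Real.sign (ρ j) * |ρ j| ^ α))) / 2)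
                    * (1 - |ρ j| ^ α)⁻¹ * N (D j (h : ℤ)) ^ α)
                  • Measure.dirac ((θ * (N (D j (h : ℤ)))⁻¹) • D j (h : ℤ)))) := by
  have hDe (j : Fin J) : D j (-m) = e := by
    ext i
    rw [hD, he]
    by_cases hi : (i : ℕ) = 0 <;> simp [hi]
  have hDh (j : Fin J) (l : ℕ) : D j (h + l) = ρ j ^ l • D j h := by
    ext i
    have := i.isLt
    rw [PiLp.smul_apply, hD, hD, smul_eq_mul, if_pos (by omega), if_pos (by omega), ← pow_add]
    congr 1
    omega
  have hIco : Finset.Ico (-(m : ℤ)) h = insert (-(m : ℤ)) (Finset.Icc (-(m : ℤ) + 1) (h - 1)) := by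
    ext k
    simp only [Finset.mem_Ico, Finset.mem_insert, Finset.mem_Icc]
    omega
  rw [Measure.sum_nat_sub_eq_sum_Ico_add_sum (fun k => ∑ j, ∑ θ ∈ ({-1, 1} : Finset ℝ),
      ENNReal.ofReal ((1 + θ * β j) / 2 * π j ^ α * N (D j k) ^ α)
        • Measure.dirac ((θ * (N (D j k))⁻¹) • D j k)) m h, hIco, Finset.sum_insert (by simp),
    Measure.sum_finsetSum]
  simp only [hDe, hDh]
  rw [sum_atoms_common_point N hβ hπ, sum_atoms_factor_weight N hβ hπ,
    Finset.sum_congr rfl fun j _ => N.sum_geometric_atoms_eq (D j h) hα0 (hρ j).1 (hρ j).2 (hβ j)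
      (Real.rpow_nonneg (hπ j).le α), Finset.sum_comm (s := Finset.univ)]
  simp only [Finset.sum_add_distrib, add_assoc]

theorem stmt13 (α : ℝ) (hα0 : 0 < α) (hα2 : α < 2)
    (J : ℕ) (hJ : 1 ≤ J)
    (ρ β π : Fin J → ℝ)
    (hρ : ∀ j, ρ j ≠ 0 ∧ |ρ j| < 1)
    (hβ : ∀ j, |β j| ≤ 1) (hπ : ∀ j, 0 < π j)
    (m h : ℕ) (hh : 1 ≤ h)
    (N : Seminorm ℝ (EuclideanSpace ℝ (Fin (m + h + 1))))
    (hN : ∀ x : EuclideanSpace ℝ (Fin (m + h + 1)),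
      N x = 0 ↔ ∀ i : Fin (m + h + 1), (i : ℕ) ≤ m → x i = 0)
    (D : Fin J → ℤ → EuclideanSpace ℝ (Fin (m + h + 1)))
    (hD : ∀ (j : Fin J) (k : ℤ) (i : Fin (m + h + 1)),
      D j k i = if ((i : ℕ) : ℤ) - (m : ℤ) ≤ k
        then ρ j ^ (k + (m : ℤ) - ((i : ℕ) : ℤ)).toNat else 0)
    (e : EuclideanSpace ℝ (Fin (m + h + 1)))
    (he : ∀ i : Fin (m + h + 1), e i = if (i : ℕ) = 0 then 1 else 0) :
    Measure.sum (fun n : ℕ => ∑ j : Fin J, ∑ θ ∈ ({-1, 1} : Finset ℝ),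
        ENNReal.ofReal ((1 + θ * β j) / 2 * π j ^ α * N (D j ((n : ℤ) - (m : ℤ))) ^ α)
          • Measure.dirac ((θ * (N (D j ((n : ℤ) - (m : ℤ))))⁻¹) • D j ((n : ℤ) - (m : ℤ))))
    = ∑ θ ∈ ({-1, 1} : Finset ℝ),
        (ENNReal.ofReal ((∑ j : Fin J, π j ^ α * ((1 + θ * β j) / 2)) * N e ^ α)
            • Measure.dirac ((θ * (N e)⁻¹) • e)
          + ∑ j : Fin J,
            (ENNReal.ofReal (π j ^ α * ((1 + θ * β j) / 2))
                • ∑ k ∈ Finset.Icc (-(m : ℤ) + 1) ((h : ℤ) - 1),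
                    ENNReal.ofReal (N (D j k) ^ α)
                      • Measure.dirac ((θ * (N (D j k))⁻¹) • D j k)
              + ENNReal.ofReal (π j ^ α
                    * ((1 + θ * (β j * (1 - |ρ j| ^ α) / (1 - Real.sign (ρ j) * |ρ j| ^ α))) / 2)
                    * (1 - |ρ j| ^ α)⁻¹ * N (D j (h : ℤ)) ^ α)
                  • Measure.dirac ((θ * (N (D j (h : ℤ)))⁻¹) • D j (h : ℤ)))) :=
  stmt13_general α hα0 J ρ β π hρ hβ hπ m h hh N D hD e he
end

section
/- Let J ≥ 1 and let ρ_1, …, ρ_J ∈ (0,1) be pairwise distinct. Let m ≥ 1, h ≥ 1 be integers and N a seminorm on ℝ^{m+h+1} (coordinates indexed by i ∈ {−m,…,h}) satisfying condition (S): N(x) = 0 ⟺ x_{−m} = ⋯ = x_0 = 0. For j ∈ {1,…,J} and −m+1 ≤ k ≤ h define d_{j,k} ∈ ℝ^{m+h+1} by (d_{j,k})_i = ρ_j^{k−i} if k ≥ i and 0 otherwise, and set d_{0,−m} = (1,0,…,0). Let I = {−1,+1} × ({1,…,J}×{−m+1,…,h} ∪ {(0,−m)}) and let f : ℝ^{m+h+1}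 → ℝ^{m+1} be the projection f(x) = (x_{−m},…,x_0). Then for every (θ₀,j₀,k₀) ∈ I with 1 ≤ j₀ ≤ J and 0 ≤ k₀ ≤ h, and every (θ′,j′,k′) ∈ I: θ′ N(d_{j′,k′})^{-1} f(d_{j′,k′}) = θ₀ N(d_{j₀,k₀})^{-1} f(d_{j₀,k₀}) holds if and only if θ′ = θ₀, j′ = j₀ and 0 ≤ k′ ≤ h. -/
/-!
For `0 ≤ k` every observed coordinate of `d_{j,k}` is `ρ_j ^ k` times that of `d_{j,0}`, so
normalizing by a seminorm that only sees the observed coordinates erases `k`. Conversely, the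
normalized pattern of `d_{j₀,k₀}` has no zero among its observed coordinates, which excludes
`d_{0,-m}` and the `d_{j,k}` with `k < 0`; for the remaining candidates the ratio of the last two
observed coordinates is `ρ_j`, and the sign of the last one is the sign `θ`.
-/

/-- Coordinate `i` of `d_{j,k}` with `r = ρ_j`; the paper's index is `i - m`. -/
def truncGeom (m : ℕ) (r : ℝ) (k : ℤ) (i : ℕ) : ℝ :=
  if (i : ℤ) - m ≤ k then r ^ (k + m - i).toNat else 0

section truncGeom

variable {m : ℕ} {r : ℝ} {k : ℤ} {i : ℕ}

theorem truncGeom_eq_zero (h : k < (i : ℤ) - m) : truncGeom m r k i = 0 :=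
  if_neg (not_le.2 h)

theorem truncGeom_pos (hr : 0 < r) (h : (i : ℤ) - m ≤ k) : 0 < truncGeom m r k i := by
  rw [truncGeom, if_pos h]
  exact pow_pos hr _

theorem truncGeom_eq_pow_mul (hk : 0 ≤ k) (hi : i ≤ m) :
    truncGeom m r k i = r ^ k.toNat * truncGeom m r 0 i := by
  rw [truncGeom, truncGeom, if_pos (by omega), if_pos (by omega), ← pow_add]
  congr 1
  omega

theorem truncGeom_pred (hk : 0 ≤ k) (hm : 1 ≤ m) :
    truncGeom m r k (m - 1) = r * truncGeom m r k m := by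
  rw [truncGeom, truncGeom, if_pos (by omega), if_pos (by omega), ← pow_succ']
  congr 1
  omega

end truncGeom

theorem Seminorm.map_eq_of_map_sub_eq_zero {𝕜 E : Type*} [SeminormedRing 𝕜] [AddCommGroup E]
    [SMul 𝕜 E] (p : Seminorm 𝕜 E) {x y : E} (h : p (x - y) = 0) : p x = p y :=
  sub_eq_zero.1 (abs_nonpos_iff.1 (h ▸ abs_sub_map_le_sub p x y))

theorem inv_seminorm_smul_observed_eq {n m : ℕ} (hmn : m + 1 ≤ n)
    (N : Seminorm ℝ (EuclideanSpace ℝ (Fin n)))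
    (hN : ∀ x : EuclideanSpace ℝ (Fin n), (∀ i : Fin n, (i : ℕ) ≤ m → x i = 0) → N x = 0)
    (f : EuclideanSpace ℝ (Fin n) → EuclideanSpace ℝ (Fin (m + 1)))
    (hf : ∀ (x : EuclideanSpace ℝ (Fin n)) (i : Fin (m + 1)), f x i = x (Fin.castLE hmn i))
    {c : ℝ} (hc : 0 < c) {x y : EuclideanSpace ℝ (Fin n)}
    (hxy : ∀ i : Fin n, (i : ℕ) ≤ m → x i = c * y i) :
    (N x)⁻¹ • f x = (N y)⁻¹ • f y := by
  have hNx : N x = c * N y := by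
    rw [N.map_eq_of_map_sub_eq_zero (y := c • y) (hN _ fun i hi => by simp [hxy i hi]),
      map_smul_eq_mul, Real.norm_of_nonneg hc.le]
  have hfx : f x = c • f y := by
    ext i
    simp only [hf, PiLp.smul_apply, smul_eq_mul]
    exact hxy _ (by simpa using Nat.lt_succ_iff.1 i.2)
  rw [hNx, hfx, smul_smul, mul_inv_rev, mul_assoc, inv_mul_cancel₀ hc.ne', mul_one]

theorem eq_of_mul_eq_mul_of_mul_eq_mul {a b x y r s : ℝ} (hx : a * x ≠ 0) (h : a * x = b * y)
    (h' : a * (r * x) = b * (s * y)) : r = s := by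
  refine mul_right_cancel₀ hx ?_
  calc r * (a * x) = a * (r * x) := by ring
    _ = b * (s * y) := h'
    _ = s * (a * x) := by rw [h]; ring

theorem eq_of_mul_pos_eq_mul_pos {θ θ' p q : ℝ} (hθ : θ = -1 ∨ θ = 1) (hθ' : θ' = -1 ∨ θ' = 1)
    (hp : 0 < p) (hq : 0 < q) (h : θ * p = θ' * q) : θ = θ' := by
  rcases hθ with rfl | rfl <;> rcases hθ' with rfl | rfl <;> linarith

theorem mul_truncGeom_ne_zero {m : ℕ} {θ q s : ℝ} {l : ℤ} {i : ℕ} (hθ : θ = -1 ∨ θ = 1)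
    (hq : 0 < q) (hs : 0 < s) (hl : 0 ≤ l) (hi : i ≤ m) : θ * q * truncGeom m s l i ≠ 0 :=
  mul_ne_zero (mul_ne_zero (by rcases hθ with rfl | rfl <;> norm_num) hq.ne')
    (truncGeom_pos hs (by omega)).ne'

theorem eq_of_mul_truncGeom_eq {m : ℕ} (hm : 1 ≤ m) {θ θ' p q r s : ℝ} {k l : ℤ}
    (hθ : θ = -1 ∨ θ = 1) (hθ' : θ' = -1 ∨ θ' = 1) (hp : 0 < p) (hq : 0 < q) (hr : 0 < r)
    (hs : 0 < s) (hkm : -(m : ℤ) + 1 ≤ k) (hl : 0 ≤ l)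
    (h : ∀ i ≤ m, θ * p * truncGeom m r k i = θ' * q * truncGeom m s l i) :
    0 ≤ k ∧ θ = θ' ∧ r = s := by
  have hk : 0 ≤ k := by
    by_contra! hk
    apply mul_truncGeom_ne_zero hθ' hq hs hl (by omega : (k + m + 1).toNat ≤ m)
    rw [← h _ (by omega), truncGeom_eq_zero (by omega), mul_zero]
  have hlast := h m le_rfl
  have hprev := h (m - 1) (Nat.sub_le m 1)
  rw [truncGeom_pred hk hm, truncGeom_pred hl hm] at hprev
  have hx : 0 < truncGeom m r k m := truncGeom_pos hr (by omega)
  have hy : 0 < truncGeom m s l m := truncGeom_pos hs (by omega)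
  exact ⟨hk, eq_of_mul_pos_eq_mul_pos hθ hθ' (mul_pos hp hx) (mul_pos hq hy)
      (by simpa only [mul_assoc] using hlast),
    eq_of_mul_eq_mul_of_mul_eq_mul (mul_truncGeom_ne_zero hθ hp hr hk le_rfl) hlast hprev⟩

theorem stmt14 (J : ℕ) (ρ : ℕ → ℝ)
    (hρ : ∀ j, 1 ≤ j → j ≤ J → 0 < ρ j ∧ ρ j < 1)
    (hinj : ∀ j j', 1 ≤ j → j ≤ J → 1 ≤ j' → j' ≤ J → ρ j = ρ j' → j = j')
    (m h : ℕ) (hm : 1 ≤ m)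
    (N : Seminorm ℝ (EuclideanSpace ℝ (Fin (m + h + 1))))
    (hN : ∀ x : EuclideanSpace ℝ (Fin (m + h + 1)),
      N x = 0 ↔ ∀ i : Fin (m + h + 1), (i : ℕ) ≤ m → x i = 0)
    (D : ℕ → ℤ → EuclideanSpace ℝ (Fin (m + h + 1)))
    (hD : ∀ j, 1 ≤ j → j ≤ J → ∀ k : ℤ, -(m : ℤ) + 1 ≤ k → k ≤ (h : ℤ) →
      ∀ i : Fin (m + h + 1),
        D j k i = if ((i : ℕ) : ℤ) - (m : ℤ) ≤ k
          then ρ j ^ (k + (m : ℤ) - ((i : ℕ) : ℤ)).toNat else 0)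
    (hD0 : ∀ i : Fin (m + h + 1), D 0 (-(m : ℤ)) i = if (i : ℕ) = 0 then 1 else 0)
    (f : EuclideanSpace ℝ (Fin (m + h + 1)) → EuclideanSpace ℝ (Fin (m + 1)))
    (hf : ∀ (x : EuclideanSpace ℝ (Fin (m + h + 1))) (i : Fin (m + 1)),
      f x i = x (Fin.castLE (by omega) i))
    (θ₀ : ℝ) (j₀ : ℕ) (k₀ : ℤ)
    (hθ₀ : θ₀ = -1 ∨ θ₀ = 1) (hj₀ : 1 ≤ j₀) (hj₀' : j₀ ≤ J)
    (hk₀ : 0 ≤ k₀) (hk₀' : k₀ ≤ (h : ℤ))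
    (θ' : ℝ) (j' : ℕ) (k' : ℤ)
    (hθ' : θ' = -1 ∨ θ' = 1)
    (hI' : (1 ≤ j' ∧ j' ≤ J ∧ -(m : ℤ) + 1 ≤ k' ∧ k' ≤ (h : ℤ))
        ∨ (j' = 0 ∧ k' = -(m : ℤ))) :
    (θ' * (N (D j' k'))⁻¹) • f (D j' k') = (θ₀ * (N (D j₀ k₀))⁻¹) • f (D j₀ k₀) ↔
      (θ' = θ₀ ∧ j' = j₀ ∧ 0 ≤ k' ∧ k' ≤ (h : ℤ)) := by
  have hfD : ∀ j, 1 ≤ j → j ≤ J → ∀ k : ℤ, -(m : ℤ) + 1 ≤ k → k ≤ h → ∀ i : Fin (m + 1),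
      f (D j k) i = truncGeom m (ρ j) k i := fun j hj hjJ k hk hkh i => by
    rw [hf, hD j hj hjJ k hk hkh]
    rfl
  have hNpos : ∀ j, 1 ≤ j → j ≤ J → ∀ k : ℤ, -(m : ℤ) + 1 ≤ k → k ≤ h → 0 < N (D j k) :=
    fun j hj hjJ k hk hkh => (apply_nonneg N _).lt_of_ne' fun h0 =>
      (truncGeom_pos (hρ j hj hjJ).1 (by omega : ((0 : ℕ) : ℤ) - m ≤ k)).ne'
        ((hD j hj hjJ k hk hkh 0).symm.trans ((hN _).1 h0 0 (Nat.zero_le _)))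
  obtain ⟨hρ₀, -⟩ := hρ j₀ hj₀ hj₀'
  constructor
  · intro heq
    have hcoord : ∀ i : Fin (m + 1), θ' * (N (D j' k'))⁻¹ * f (D j' k') i
        = θ₀ * (N (D j₀ k₀))⁻¹ * truncGeom m (ρ j₀) k₀ i := fun i => by
      rw [← hfD j₀ hj₀ hj₀' k₀ (by omega) hk₀' i]
      simpa using congrArg (· i) heq
    have hq := inv_pos.2 (hNpos j₀ hj₀ hj₀' k₀ (by omega) hk₀')
    rcases hI' with ⟨hj', hj'J, hk'm, hk'h⟩ | ⟨rfl, rfl⟩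
    · obtain ⟨hk', hθ, hρ'⟩ := eq_of_mul_truncGeom_eq hm hθ' hθ₀
        (inv_pos.2 (hNpos j' hj' hj'J k' hk'm hk'h)) hq (hρ j' hj' hj'J).1 hρ₀ hk'm hk₀
        fun i hi => by simpa [hfD j' hj' hj'J k' hk'm hk'h] using hcoord ⟨i, by omega⟩
      exact ⟨hθ, hinj j' j₀ hj' hj'J hj₀ hj₀' hρ', hk', hk'h⟩
    · refine (mul_truncGeom_ne_zero (i := 1) hθ₀ hq hρ₀ hk₀ hm ?_).elim
      rw [← hcoord ⟨1, by omega⟩, hf, hD0]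
      simp
  · rintro ⟨rfl, rfl, hk', hk'h⟩
    have hnormal : ∀ k : ℤ, 0 ≤ k → k ≤ h →
        (N (D j' k))⁻¹ • f (D j' k) = (N (D j' 0))⁻¹ • f (D j' 0) := fun k hk hkh =>
      inv_seminorm_smul_observed_eq _ N (fun x => (hN x).2) f hf (pow_pos hρ₀ k.toNat)
        fun i hi => by
          rw [hD j' hj₀ hj₀' k (by omega) hkh, hD j' hj₀ hj₀' 0 (by omega) (by omega)]
          exact truncGeom_eq_pow_mul hk hi
    rw [mul_smul, mul_smul, hnormal k' hk' hk'h, hnormal k₀ hk₀ hk₀']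
end
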